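/- arXiv:2510.03149 — 9 statements merged into one kernel-verified Lean document; each statement's English description precedes it below -/
import Mathlib

section
/- Let p and q be probability distributions on a finite domain X and let E ⊆ X be an event with q(E) > 0. Then the total variation distance between the conditional distributions satisfies TV(p|E, q|E) ≤ TV(p,q)/q(E). -/
open Finset

/-- **TV distance of conditional distributions.** For probability distributions `p, q`
on a finite domain `X` and an event `E ⊆ X` with `p(E) > 0` and `q(E) > 0`,
`TV(p|E, q|E) ≤ TV(p,q) / q(E)`, where `p|E (x) = p x · 1[x ∈ E] / p(E)`. -/
theorem tv_conditional {X : Type*} [Fintype X] [DecidableEq X] (p q : X → ℝ) (E : Finset X)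
    (hp : ∀ x, 0 ≤ p x) (hq : ∀ x, 0 ≤ q x)
    (hp1 : ∑ x, p x = 1) (hq1 : ∑ x, q x = 1)
    (hpE : 0 < ∑ x ∈ E, p x) (hqE : 0 < ∑ x ∈ E, q x) :
    (1 / 2) * ∑ x, |(if x ∈ E then p x / (∑ x' ∈ E, p x') else 0) -
        (if x ∈ E then q x / (∑ x' ∈ E, q x') else 0)|
      ≤ ((1 / 2) * ∑ x, |p x - q x|) / (∑ x' ∈ E, q x') := by
  set P := ∑ x ∈ E, p x with hP
  set Q := ∑ x ∈ E, q x with hQ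
  have hP0 : P ≠ 0 := ne_of_gt hpE
  have hQ0 : Q ≠ 0 := ne_of_gt hqE
  have hsum : ∑ x, |(if x ∈ E then p x / P else 0) - (if x ∈ E then q x / Q else 0)|
      = ∑ x ∈ E, |p x / P - q x / Q| := by
    rw [← Finset.sum_subset (Finset.subset_univ E)]
    · exact Finset.sum_congr rfl fun x hx => by simp [hx]
    · intro x _ hx; simp [hx]
  rw [hsum, mul_div_assoc]
  apply mul_le_mul_of_nonneg_left _ (by norm_num : (0:ℝ) ≤ 1/2)
  -- key pointwise bound
  have key : ∀ x ∈ E, |p x / P - q x / Q| ≤ |p x - q x| / Q + (p x / P) * (|P - Q| / Q) := by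
    intro x _
    have hid : p x / P - q x / Q = (p x - q x) / Q + (p x / P) * ((Q - P) / Q) := by
      field_simp
      ring
    rw [hid]
    calc |(p x - q x) / Q + (p x / P) * ((Q - P) / Q)|
        ≤ |(p x - q x) / Q| + |(p x / P) * ((Q - P) / Q)| := abs_add_le _ _
      _ = |p x - q x| / Q + (p x / P) * (|P - Q| / Q) := by
          rw [abs_div, abs_of_pos hqE, abs_mul, abs_div, abs_div, abs_of_pos hqE,
            abs_of_pos hpE, abs_of_nonneg (hp x), abs_sub_comm Q P]
  have hsumP : ∑ x ∈ E, p x / P = 1 := by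
    rw [← Finset.sum_div, ← hP, div_self hP0]
  have h1 : ∑ x ∈ E, |p x / P - q x / Q|
      ≤ (∑ x ∈ E, |p x - q x|) / Q + |P - Q| / Q := by
    calc ∑ x ∈ E, |p x / P - q x / Q|
        ≤ ∑ x ∈ E, (|p x - q x| / Q + (p x / P) * (|P - Q| / Q)) :=
          Finset.sum_le_sum key
      _ = (∑ x ∈ E, |p x - q x|) / Q + (∑ x ∈ E, p x / P) * (|P - Q| / Q) := by
          rw [Finset.sum_add_distrib, Finset.sum_div, ← Finset.sum_mul]
      _ = (∑ x ∈ E, |p x - q x|) / Q + |P - Q| / Q := by rw [hsumP, one_mul]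
  refine h1.trans ?_
  rw [← add_div, div_le_div_iff_of_pos_right hqE]
  have hcompl : ∑ x ∈ E, |p x - q x| + ∑ x ∈ Eᶜ, |p x - q x| = ∑ x, |p x - q x| :=
    Finset.sum_add_sum_compl E _
  have habs : |P - Q| ≤ ∑ x ∈ Eᶜ, |p x - q x| := by
    have hPQ : P - Q = ∑ x ∈ Eᶜ, (q x - p x) := by
      have h1' : P + ∑ x ∈ Eᶜ, p x = 1 := by rw [hP, Finset.sum_add_sum_compl]; exact hp1
      have h2' : Q + ∑ x ∈ Eᶜ, q x = 1 := by rw [hQ, Finset.sum_add_sum_compl]; exact hq1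
      rw [Finset.sum_sub_distrib]
      linarith
    rw [hPQ]
    calc |∑ x ∈ Eᶜ, (q x - p x)| ≤ ∑ x ∈ Eᶜ, |q x - p x| := Finset.abs_sum_le_sum_abs _ _
      _ = ∑ x ∈ Eᶜ, |p x - q x| := Finset.sum_congr rfl fun x _ => abs_sub_comm _ _
  linarith
end

section
/- Let p and q be probability distributions on a finite domain X and let E ⊆ X be an event. Then the χ²-divergence of the conditional distributions satisfies χ²(p|E ‖ q|E) ≤ χ²(p‖q) / (q(E) − 2·√(q(E)·χ²(p‖q))), provided the denominator is positive. -/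
open Finset

set_option maxHeartbeats 1000000 in

/-- **χ²-divergence of conditional distributions.** For probability distributions
`p, q` on a finite domain `X` with `p ≪ q` and an event `E ⊆ X` with `p(E), q(E) > 0`,
if the denominator `q(E) − 2√(q(E)·χ²(p‖q))` is positive, then
`χ²(p|E ‖ q|E) ≤ χ²(p‖q) / (q(E) − 2√(q(E)·χ²(p‖q)))`, where
`χ²(p‖q) = ∑ q x · (p x / q x)² − 1` and `p|E (x) = p x · 1[x ∈ E] / p(E)`. -/
theorem chisq_conditional {X : Type*} [Fintype X] [DecidableEq X] (p q : X → ℝ) (E : Finset X)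
    (hp : ∀ x, 0 ≤ p x) (hq : ∀ x, 0 ≤ q x)
    (hp1 : ∑ x, p x = 1) (hq1 : ∑ x, q x = 1)
    (hac : ∀ x, q x = 0 → p x = 0)
    (hpE : 0 < ∑ x ∈ E, p x) (hqE : 0 < ∑ x ∈ E, q x)
    (hchi : (∑ x, q x * (p x / q x) ^ 2) - 1 ≤ ∑ x ∈ E, q x)
    (hden : 0 < (∑ x' ∈ E, q x') -
        2 * Real.sqrt ((∑ x' ∈ E, q x') * ((∑ x, q x * (p x / q x) ^ 2) - 1))) :
    (∑ x, (if x ∈ E then q x / (∑ x' ∈ E, q x') else 0) *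
        ((if x ∈ E then p x / (∑ x' ∈ E, p x') else 0) /
          (if x ∈ E then q x / (∑ x' ∈ E, q x') else 0)) ^ 2) - 1
      ≤ ((∑ x, q x * (p x / q x) ^ 2) - 1) /
          ((∑ x' ∈ E, q x') -
            2 * Real.sqrt ((∑ x' ∈ E, q x') * ((∑ x, q x * (p x / q x) ^ 2) - 1))) := by
  set qE := ∑ x' ∈ E, q x' with hqEdef
  set pE := ∑ x' ∈ E, p x' with hpEdef
  set χ := (∑ x, q x * (p x / q x) ^ 2) - 1 with hχdef
  -- pointwise identity for chi-square terms
  have hid : ∀ x, q x * (p x / q x) ^ 2 = (p x - q x) ^ 2 / q x + 2 * p x - q x := by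
    intro x
    by_cases hqx : q x = 0
    · simp [hqx, hac x hqx]
    · field_simp
      ring
  have hχEq : χ = ∑ x, (p x - q x) ^ 2 / q x := by
    rw [hχdef]
    simp_rw [hid]
    rw [Finset.sum_sub_distrib, Finset.sum_add_distrib, ← Finset.mul_sum, hp1, hq1]
    ring
  have hχ0 : 0 ≤ χ := by
    rw [hχEq]
    exact Finset.sum_nonneg fun x _ => div_nonneg (sq_nonneg _) (hq x)
  -- partial sum bound
  have hpartial : ∑ x ∈ E, (p x - q x) ^ 2 / q x ≤ χ := by
    rw [hχEq]
    exact Finset.sum_le_sum_of_subset_of_nonneg (Finset.subset_univ E)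
      (fun x _ _ => div_nonneg (sq_nonneg _) (hq x))
  -- S bound
  have hS : ∑ x ∈ E, q x * (p x / q x) ^ 2 ≤ χ + 2 * pE - qE := by
    calc ∑ x ∈ E, q x * (p x / q x) ^ 2
        = ∑ x ∈ E, ((p x - q x) ^ 2 / q x + 2 * p x - q x) :=
          Finset.sum_congr rfl fun x _ => hid x
      _ = (∑ x ∈ E, (p x - q x) ^ 2 / q x) + 2 * pE - qE := by
          rw [Finset.sum_sub_distrib, Finset.sum_add_distrib, ← Finset.mul_sum]
      _ ≤ χ + 2 * pE - qE := by linarith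
  -- Cauchy-Schwarz
  have hCS : (pE - qE) ^ 2 ≤ qE * χ := by
    have h := Finset.sum_mul_sq_le_sq_mul_sq E (fun x => Real.sqrt (q x))
      (fun x => (p x - q x) / Real.sqrt (q x))
    have h1 : ∑ x ∈ E, Real.sqrt (q x) * ((p x - q x) / Real.sqrt (q x)) = pE - qE := by
      rw [hpEdef, hqEdef, ← Finset.sum_sub_distrib]
      refine Finset.sum_congr rfl fun x _ => ?_
      by_cases hqx : q x = 0
      · simp [hqx, hac x hqx]
      · have : (0:ℝ) < q x := lt_of_le_of_ne (hq x) (Ne.symm hqx)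
        rw [mul_div_cancel₀ _ (Real.sqrt_pos.mpr this).ne']
    have h2 : ∑ x ∈ E, Real.sqrt (q x) ^ 2 = qE := by
      refine Finset.sum_congr rfl fun x _ => Real.sq_sqrt (hq x)
    have h3 : ∑ x ∈ E, ((p x - q x) / Real.sqrt (q x)) ^ 2
        = ∑ x ∈ E, (p x - q x) ^ 2 / q x := by
      refine Finset.sum_congr rfl fun x _ => ?_
      rw [div_pow, Real.sq_sqrt (hq x)]
    rw [h1, h2, h3] at h
    calc (pE - qE) ^ 2 ≤ qE * ∑ x ∈ E, (p x - q x) ^ 2 / q x := h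
      _ ≤ qE * χ := by
          exact mul_le_mul_of_nonneg_left hpartial (le_of_lt hqE)
  -- sqrt facts
  have hsq0 : 0 ≤ Real.sqrt (qE * χ) := Real.sqrt_nonneg _
  have hsqsq : Real.sqrt (qE * χ) ^ 2 = qE * χ :=
    Real.sq_sqrt (mul_nonneg hqE.le hχ0)
  set s := Real.sqrt (qE * χ) with hsdef
  -- pE ≥ qE - s
  have hpE_lb : qE - s ≤ pE := by nlinarith [sq_nonneg (pE - qE + s)]
  -- pE^2 ≥ qE * (qE - 2s)
  have hD : 0 < qE - 2 * s := hden
  have hpE2 : qE * (qE - 2 * s) ≤ pE ^ 2 := by nlinarith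
  -- rewrite LHS sum
  have hterm : ∀ x, (if x ∈ E then q x / qE else 0) *
        ((if x ∈ E then p x / pE else 0) / (if x ∈ E then q x / qE else 0)) ^ 2
      = if x ∈ E then qE / pE ^ 2 * (q x * (p x / q x) ^ 2) else 0 := by
    intro x
    by_cases hx : x ∈ E
    · simp only [if_pos hx]
      by_cases hqx : q x = 0
      · simp [hqx, hac x hqx]
      · have hqE' : qE ≠ 0 := hqE.ne'
        have hpE' : pE ≠ 0 := hpE.ne'
        field_simp
    · simp [hx]
  have hLHS : (∑ x, (if x ∈ E then q x / qE else 0) *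
        ((if x ∈ E then p x / pE else 0) / (if x ∈ E then q x / qE else 0)) ^ 2)
      = qE / pE ^ 2 * ∑ x ∈ E, q x * (p x / q x) ^ 2 := by
    rw [Finset.sum_congr rfl fun x _ => hterm x, Finset.sum_ite_mem,
      Finset.univ_inter, Finset.mul_sum]
  rw [hLHS]
  -- final inequality
  set S := ∑ x ∈ E, q x * (p x / q x) ^ 2 with hSdef
  have hpE2pos : 0 < pE ^ 2 := by positivity
  have h1 : qE / pE ^ 2 * S - 1 = (qE * S - pE ^ 2) / pE ^ 2 := by
    field_simp
  rw [h1, div_le_div_iff₀ hpE2pos hD]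
  have hqES : qE * S ≤ qE * χ - (pE - qE) ^ 2 + pE ^ 2 := by
    nlinarith [mul_le_mul_of_nonneg_left hS hqE.le]
  have h2 : qE * S - pE ^ 2 ≤ qE * χ := by nlinarith [sq_nonneg (pE - qE)]
  nlinarith [mul_le_mul_of_nonneg_right h2 hD.le, mul_le_mul_of_nonneg_left hpE2 hχ0]
end

section
/- For every n ∈ ℕ and Δ ∈ (0, 1/2), the total variation distance between Binomial(n, 1/2) and Binomial(n, 1/2 + Δ) is at least c·min(Δ·√n, 1) for some universal constant c > 0. -/
set_option maxHeartbeats 1000000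

open Finset

/-- The binomial probability mass function with `n` trials and success probability `p`. -/
noncomputable def binomPMF (n : ℕ) (p : ℝ) (k : ℕ) : ℝ :=
  (n.choose k : ℝ) * p ^ k * (1 - p) ^ (n - k)

lemma sixteen_pow_le (k : ℕ) (hk : 1 ≤ k) : 16 ^ k ≤ 4 * k * (Nat.centralBinom k)^2 := by
  induction k with
  | zero => omega
  | succ m ih =>
    rcases Nat.eq_or_lt_of_le hk with h1 | h1
    · simp [← h1]; rfl
    · have hm : 1 ≤ m := by omega
      have ihm := ih hm
      have hrec := Nat.succ_mul_centralBinom_succ m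
      set C := Nat.centralBinom m with hC
      have key : 16 ^ (m+1) * (m+1)^2 ≤ (4 * (m+1) * (Nat.centralBinom (m+1))^2) * (m+1)^2 := by
        calc 16^(m+1)*(m+1)^2 = 16 * (m+1)^2 * 16^m := by ring
          _ ≤ 16*(m+1)^2 * (4*m*C^2) := Nat.mul_le_mul_left _ ihm
          _ ≤ 4*(m+1)*(2*(2*m+1)*C)^2 := by nlinarith [sq_nonneg C]
          _ = 4*(m+1)*((m+1)*Nat.centralBinom (m+1))^2 := by rw [hrec]
          _ = (4*(m+1)*(Nat.centralBinom (m+1))^2)*(m+1)^2 := by ring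
      exact Nat.le_of_mul_le_mul_right key (by positivity)

lemma centralBinom_real_lb (k : ℕ) (hk : 1 ≤ k) :
    (4:ℝ) ^ k ≤ 2 * Real.sqrt k * Nat.centralBinom k := by
  have h := sixteen_pow_le k hk
  have hR : (16:ℝ) ^ k ≤ 4 * k * (Nat.centralBinom k : ℝ)^2 := by exact_mod_cast h
  have hk0 : (0:ℝ) ≤ k := by positivity
  have hsq : Real.sqrt k * Real.sqrt k = k := Real.mul_self_sqrt hk0
  have h4 : ((4:ℝ)^k)^2 = 16^k := by
    rw [← pow_mul, pow_mul']
    norm_num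
  have hrhs : (2 * Real.sqrt k * Nat.centralBinom k)^2 = 4 * k * (Nat.centralBinom k : ℝ)^2 := by
    ring_nf
    nlinarith [hsq]
  have hsq2 : ((4:ℝ)^k)^2 ≤ (2 * Real.sqrt k * Nat.centralBinom k)^2 := by
    rw [h4, hrhs]; exact hR
  have h1 : (0:ℝ) ≤ (4:ℝ)^k := by positivity
  have h2 : (0:ℝ) ≤ 2 * Real.sqrt k * Nat.centralBinom k := by positivity
  nlinarith [hsq2]

lemma coeff_lb (n : ℕ) (hn : 1 ≤ n) :
    (2:ℝ)^(n-1) * Real.sqrt n ≤ 4 * n * ((n-1).choose (n/2)) := by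
  rcases Nat.even_or_odd n with he | ho
  · -- n = 2m+2
    obtain ⟨j, hj⟩ := he
    obtain ⟨m, hm⟩ : ∃ m, n = 2*m+2 := ⟨j-1, by omega⟩
    have h1 : n - 1 = 2*m+1 := by omega
    have h2 : n / 2 = m+1 := by omega
    rw [h1, h2, hm]
    have hch : 2 * ((2*m+1).choose (m+1)) = Nat.centralBinom (m+1) := by
      have e1 : Nat.centralBinom (m+1) = (2*m+1).choose m + (2*m+1).choose (m+1) := by
        rw [Nat.centralBinom, show 2*(m+1) = (2*m+1)+1 from by ring]
        exact Nat.choose_succ_succ _ _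
      rw [e1, Nat.choose_symm_half]
      ring
    have hchR : ((2*m+1).choose (m+1) : ℝ) = (Nat.centralBinom (m+1) : ℝ) / 2 := by
      rw [← hch]; push_cast; ring
    rw [hchR]
    have hlb := centralBinom_real_lb (m+1) (by omega)
    have hmc : ((m+1:ℕ):ℝ) = (m:ℝ)+1 := by push_cast; ring
    rw [hmc] at hlb
    set C := (Nat.centralBinom (m+1) : ℝ) with hCdef
    set s := Real.sqrt ((m:ℝ)+1) with hs
    have hs0 : 0 ≤ s := Real.sqrt_nonneg _
    have hss : s * s = (m:ℝ)+1 := Real.mul_self_sqrt (by positivity)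
    have hsplit : Real.sqrt ((2*m+2:ℕ):ℝ) = Real.sqrt 2 * s := by
      rw [show ((2*m+2:ℕ):ℝ) = 2*((m:ℝ)+1) from by push_cast; ring,
        Real.sqrt_mul (by norm_num)]
    rw [hsplit]
    have h2s : Real.sqrt 2 ≤ 2 := by
      nlinarith [Real.sq_sqrt (by norm_num : (0:ℝ) ≤ 2), Real.sqrt_nonneg 2]
    have hpow : (2:ℝ)^(2*m+1) = 2 * 4^m := by
      rw [pow_succ, pow_mul]; norm_num [mul_comm]
    have hCB0 : (0:ℝ) ≤ C := by rw [hCdef]; positivity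
    have key := mul_le_mul_of_nonneg_right hlb hs0
    have key2 : 4*(4:ℝ)^m*s ≤ 2*((m:ℝ)+1)*C := by
      calc 4*(4:ℝ)^m*s = 4^(m+1)*s := by ring
        _ ≤ 2*s*C*s := key
        _ = 2*(s*s)*C := by ring
        _ = 2*((m:ℝ)+1)*C := by rw [hss]
    push_cast
    calc (2:ℝ)^(2*m+1) * (Real.sqrt 2 * s) = Real.sqrt 2 * (2*(4^m*s)) := by rw [hpow]; ring
      _ ≤ 2 * (2*(4^m*s)) := mul_le_mul_of_nonneg_right h2s (by positivity)
      _ = 4*4^m*s := by ring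
      _ ≤ 2*((m:ℝ)+1)*C := key2
      _ ≤ 4*(2*(m:ℝ)+2)*(C/2) := by nlinarith [mul_nonneg ((Nat.cast_nonneg m : (0:ℝ) ≤ m)) hCB0, hCB0]
  · obtain ⟨k, hk⟩ := ho
    have h1 : n - 1 = 2*k := by omega
    have h2 : n / 2 = k := by omega
    rw [h1, h2, hk]
    have hcb : ((2*k).choose k : ℝ) = Nat.centralBinom k := by rw [Nat.centralBinom]
    rw [hcb]
    rcases Nat.eq_zero_or_pos k with h0 | hpos
    · subst h0; simp [Nat.centralBinom]
    · have hlb := centralBinom_real_lb k hpos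
      have hsqk : Real.sqrt k * Real.sqrt k = k := Real.mul_self_sqrt (by positivity)
      have hkcast : ((2*k+1:ℕ):ℝ) = 2*(k:ℝ)+1 := by push_cast; ring
      rw [hkcast]
      have hs2 : Real.sqrt k ≤ Real.sqrt (2*(k:ℝ)+1) :=
        Real.sqrt_le_sqrt (by nlinarith [(Nat.cast_nonneg k : (0:ℝ) ≤ k)])
      have hsqn : Real.sqrt (2*(k:ℝ)+1) * Real.sqrt (2*(k:ℝ)+1) = (2*(k:ℝ)+1) :=
        Real.mul_self_sqrt (by positivity)
      have hp : (2:ℝ)^(2*k) = 4^k := by rw [pow_mul]; norm_num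
      rw [hp]
      have hCB0 : (0:ℝ) ≤ Nat.centralBinom k := by positivity
      have hs0 : (0:ℝ) ≤ Real.sqrt (2*(k:ℝ)+1) := Real.sqrt_nonneg _
      have hsk0 : (0:ℝ) ≤ Real.sqrt k := Real.sqrt_nonneg _
      have step1 := mul_le_mul_of_nonneg_right hlb hs0
      have step2 : Real.sqrt k * Real.sqrt (2*(k:ℝ)+1) ≤ 2*(k:ℝ)+1 := by
        nlinarith [mul_le_mul_of_nonneg_right hs2 hs0]
      nlinarith [mul_le_mul_of_nonneg_right step2 hCB0,
        mul_nonneg (mul_nonneg hsk0 hs0) hCB0]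

lemma term_deriv (n j : ℕ) (hj : j + 1 ≤ n) (x : ℝ) :
    HasDerivAt (fun y : ℝ => (n.choose (j+1) : ℝ) * y^(j+1) * (1-y)^(n-(j+1)))
      ((n:ℝ) * ((n-1).choose j) * x^j * (1-x)^(n-1-j)
        - (n:ℝ) * ((n-1).choose (j+1)) * x^(j+1) * (1-x)^(n-1-(j+1))) x := by
  obtain ⟨m, rfl⟩ : ∃ m, n = m + 1 := ⟨n-1, by omega⟩
  have hjm : j ≤ m := by omega
  have h1 : HasDerivAt (fun y : ℝ => y^(j+1)) (((j:ℝ)+1) * x^j) x := by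
    simpa using hasDerivAt_pow (j+1) x
  have hbase : HasDerivAt (fun y : ℝ => 1-y) (-1 : ℝ) x := by
    simpa using (hasDerivAt_id x).const_sub 1
  have h2 : HasDerivAt (fun y : ℝ => (1-y)^(m+1-(j+1)))
      (-(((m+1-(j+1):ℕ):ℝ) * (1-x)^(m+1-(j+1)-1))) x := by
    simpa [mul_comm, mul_assoc] using hbase.fun_pow (m+1-(j+1))
  have h3 : HasDerivAt
      (fun y : ℝ => ((m+1).choose (j+1) : ℝ) * y^(j+1) * (1-y)^(m+1-(j+1)))
      (((m+1).choose (j+1) : ℝ) * ((((j:ℝ)+1) * x^j) * (1-x)^(m+1-(j+1))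
        + x^(j+1) * (-(((m+1-(j+1):ℕ):ℝ) * (1-x)^(m+1-(j+1)-1))))) x := by
    simpa [mul_assoc] using (h1.mul h2).const_mul (((m+1).choose (j+1) : ℝ))
  have c1 : (j+1) * ((m+1).choose (j+1)) = (m+1) * m.choose j := by
    rw [mul_comm]
    simpa [Nat.succ_eq_add_one] using (Nat.add_one_mul_choose_eq m j).symm
  have c2 : ((m+1).choose (j+1)) * ((m+1) - (j+1)) = (m+1) * m.choose (j+1) := by
    rw [← Nat.choose_succ_right_eq]
    simpa [Nat.succ_eq_add_one] using (Nat.add_one_mul_choose_eq m (j+1)).symm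
  have c1R : ((j:ℝ)+1) * (((m+1).choose (j+1) : ℕ) : ℝ)
      = ((m:ℝ)+1) * ((m.choose j : ℕ) : ℝ) := by exact_mod_cast c1
  have c2R : (((m+1).choose (j+1) : ℕ) : ℝ) * ((m:ℝ) - (j:ℝ))
      = ((m:ℝ)+1) * ((m.choose (j+1) : ℕ) : ℝ) := by
    have c2' : ((m+1).choose (j+1)) * (m - j) = (m+1) * m.choose (j+1) := by
      rw [show m - j = m+1-(j+1) from by omega]; exact c2
    rw [← Nat.cast_sub hjm]
    exact_mod_cast c2'
  have hcast1 : ((m+1-(j+1):ℕ):ℝ) = (m:ℝ) - (j:ℝ) := by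
    rw [show m+1-(j+1) = m-j from by omega]
    exact Nat.cast_sub hjm
  have heq : ((m+1:ℕ):ℝ) * (((m+1-1).choose j : ℕ) : ℝ) * x^j * (1-x)^(m+1-1-j)
        - ((m+1:ℕ):ℝ) * (((m+1-1).choose (j+1) : ℕ):ℝ) * x^(j+1) * (1-x)^(m+1-1-(j+1))
      = ((m+1).choose (j+1) : ℝ) * ((((j:ℝ)+1) * x^j) * (1-x)^(m+1-(j+1))
        + x^(j+1) * (-(((m+1-(j+1):ℕ):ℝ) * (1-x)^(m+1-(j+1)-1)))) := by
    simp only [hcast1,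
      show m+1-1-j = m-j from by omega, show m+1-(j+1) = m-j from by omega,
      show m+1-1-(j+1) = m-j-1 from by omega, show m+1-(j+1)-1 = m-j-1 from by omega,
      show m-(j+1) = m-j-1 from by omega, Nat.cast_sub hjm,
      Nat.add_sub_cancel,
      show ((m+1:ℕ):ℝ) = (m:ℝ)+1 from by push_cast; ring]
    linear_combination -(x^j*(1-x)^(m-j)) * c1R + (x^(j+1)*(1-x)^(m-j-1)) * c2R
  rw [heq]
  exact h3

lemma tail_deriv (n t : ℕ) (ht : 1 ≤ t) (htn : t ≤ n) (x : ℝ) :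
    HasDerivAt (fun y : ℝ => ∑ k ∈ Finset.Ico t (n+1), (n.choose k : ℝ) * y^k * (1-y)^(n-k))
      ((n:ℝ) * ((n-1).choose (t-1)) * x^(t-1) * (1-x)^(n-t)) x := by
  set F : ℕ → ℝ := fun j => (n:ℝ) * ((n-1).choose j) * x^j * (1-x)^(n-1-j) with hF
  have hterm : ∀ k ∈ Finset.Ico t (n+1),
      HasDerivAt (fun y : ℝ => (n.choose k : ℝ) * y^k * (1-y)^(n-k)) (F (k-1) - F k) x := by
    intro k hk
    simp only [Finset.mem_Ico] at hk
    obtain ⟨j, rfl⟩ : ∃ j, k = j + 1 := ⟨k-1, by omega⟩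
    have := term_deriv n j (by omega) x
    simpa [hF] using this
  have hsum := HasDerivAt.fun_sum hterm
  have htel : ∑ k ∈ Finset.Ico t (n+1), (F (k-1) - F k) = F (t-1) - F n := by
    rw [Finset.sum_Ico_eq_sum_range]
    have hre : ∀ i ∈ Finset.range (n+1-t), F (t+i-1) - F (t+i)
        = F (t-1+i) - F (t-1+(i+1)) := by
      intro i _
      congr 2 <;> omega
    rw [Finset.sum_congr rfl hre, Finset.sum_range_sub' (fun i => F (t-1+i))]
    congr 2 <;> omega
  have hFn : F n = 0 := by
    simp [hF, Nat.choose_eq_zero_of_lt (show n-1 < n by omega)]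
  have hFt : F (t-1) = (n:ℝ) * ((n-1).choose (t-1)) * x^(t-1) * (1-x)^(n-t) := by
    simp only [hF, show n-1-(t-1) = n-t from by omega]
  rw [htel, hFn, hFt, sub_zero] at hsum
  exact hsum

/-- **TV lower bound for shifted binomials.** There is a universal constant `c > 0`
such that for all `n ∈ ℕ` and `Δ ∈ (0, 1/2)`,
`TV(Bin(n,1/2), Bin(n,1/2+Δ)) ≥ c · min(Δ·√n, 1)`. -/
theorem binomial_tv_lower_bound :
    ∃ c > (0 : ℝ), ∀ (n : ℕ) (Δ : ℝ), 0 < Δ → Δ < 1 / 2 →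
      c * min (Δ * Real.sqrt n) 1
        ≤ (1 / 2) * ∑ k ∈ Finset.range (n + 1),
            |binomPMF n (1 / 2) k - binomPMF n (1 / 2 + Δ) k| := by
  refine ⟨1/32, by norm_num, ?_⟩
  intro n Δ hΔ0 hΔhalf
  rcases Nat.eq_zero_or_pos n with rfl | hn
  · simp [binomPMF]
  have hn1 : 1 ≤ n := hn
  have hnR : (1:ℝ) ≤ n := by exact_mod_cast hn1
  set t := n/2 + 1 with htdef
  have ht1 : 1 ≤ t := by omega
  have htn : t ≤ n := by omega
  set sq := Real.sqrt n with hsqdef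
  have hsq0 : 0 < sq := Real.sqrt_pos.mpr (by positivity)
  have hsqsq : sq * sq = (n:ℝ) := Real.mul_self_sqrt (by positivity)
  set δ := min Δ (1/(2*sq)) with hδdef
  have hδ0 : 0 < δ := lt_min hΔ0 (by positivity)
  have hδΔ : δ ≤ Δ := min_le_left _ _
  have hδsq : δ ≤ 1/(2*sq) := min_le_right _ _
  set g : ℝ → ℝ :=
    fun y => ∑ k ∈ Finset.Ico t (n+1), (n.choose k : ℝ) * y^k * (1-y)^(n-k) with hgdef
  set d : ℝ → ℝ :=
    fun y => (n:ℝ) * ((n-1).choose (t-1)) * y^(t-1) * (1-y)^(n-t) with hddef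
  have hderiv : ∀ x : ℝ, HasDerivAt g (d x) x := fun x => tail_deriv n t ht1 htn x
  have hgdiff : Differentiable ℝ g := fun x => (hderiv x).differentiableAt
  have hdval : ∀ x, deriv g x = d x := fun x => (hderiv x).deriv
  -- lower bound on the derivative on [1/2, 1/2+δ]
  have hdlb : ∀ x ∈ Set.Icc (1/2:ℝ) (1/2+δ), sq/8 ≤ d x := by
    intro x hx
    obtain ⟨hx1, hx2⟩ := hx
    have hxle1 : x ≤ 1 := by
      have : δ < 1/2 := lt_of_le_of_lt hδΔ hΔhalf
      linarith
    have hx0 : (0:ℝ) < x := by linarith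
    have h1x0 : (0:ℝ) ≤ 1 - x := by linarith
    -- (x-1/2)^2 ≤ 1/(4n)
    have hδ2 : δ^2 ≤ 1/(4*(n:ℝ)) := by
      have h1 : δ^2 ≤ (1/(2*sq))^2 := by nlinarith
      have h2 : (1/(2*sq))^2 = 1/(4*(n:ℝ)) := by
        field_simp
        nlinarith [hsqsq]
      linarith [h1, h2.le]
    have hprod : (1/4) * (1 - 1/(n:ℝ)) ≤ x*(1-x) := by
      have he2 : (x - 1/2)^2 ≤ 1/(4*(n:ℝ)) := by nlinarith
      have hn0 : (0:ℝ) < n := by linarith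
      have : 1/(4*(n:ℝ)) = (1/4) * (1/(n:ℝ)) := by ring
      nlinarith [he2]
    have hprod0 : (0:ℝ) ≤ (1/4) * (1 - 1/(n:ℝ)) := by
      have : 1/(n:ℝ) ≤ 1 := by
        rw [div_le_one (by linarith)]; exact hnR
      linarith
    set a := (t-1) - (n-t) with hadef
    have hsplit : x^(t-1)*(1-x)^(n-t) = x^a * (x*(1-x))^(n-t) := by
      rw [mul_pow, show t-1 = a + (n-t) from by omega, pow_add]
      ring
    have hxa : (1/2:ℝ)^a ≤ x^a := pow_le_pow_left₀ (by norm_num) hx1 a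
    have hpp : ((1/4) * (1 - 1/(n:ℝ)))^(n-t) ≤ (x*(1-x))^(n-t) :=
      pow_le_pow_left₀ hprod0 hprod _
    have hbern : (1:ℝ)/2 ≤ (1 - 1/(n:ℝ))^(n-t) := by
      have hb := one_add_mul_le_pow (a := -(1/(n:ℝ))) (by
        have : (0:ℝ) < 1/(n:ℝ) := by positivity
        have : 1/(n:ℝ) ≤ 1 := by rw [div_le_one (by linarith)]; exact hnR
        linarith) (n-t)
      have hnt : 2*(n-t) ≤ n := by omega
      have hntR : ((n-t:ℕ):ℝ) * (1/(n:ℝ)) ≤ 1/2 := by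
        have h3 : ((n-t:ℕ):ℝ) * 2 ≤ (n:ℝ) := by exact_mod_cast (show (n-t)*2 ≤ n by omega)
        rw [mul_one_div, div_le_div_iff₀ (by linarith) (by norm_num : (0:ℝ) < 2)]
        linarith
      have : 1 + ((n-t:ℕ):ℝ) * (-(1/(n:ℝ))) = 1 - ((n-t:ℕ):ℝ) * (1/(n:ℝ)) := by ring
      rw [this] at hb
      have hform : (1 + -(1/(n:ℝ))) = 1 - 1/(n:ℝ) := by ring
      rw [hform] at hb
      linarith
    -- combine powers
    have hApow : (1/2:ℝ)^(n-1) * (1/2) ≤ x^(t-1)*(1-x)^(n-t) := by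
      rw [hsplit]
      have hmp : ((1/4) * (1 - 1/(n:ℝ)))^(n-t) = (1/4:ℝ)^(n-t) * (1 - 1/(n:ℝ))^(n-t) := mul_pow _ _ _
      have step : (1/2:ℝ)^a * ((1/4:ℝ)^(n-t) * (1/2)) ≤ x^a * (x*(1-x))^(n-t) := by
        have hlhs2 : (1/4:ℝ)^(n-t) * (1/2) ≤ ((1/4) * (1 - 1/(n:ℝ)))^(n-t) := by
          rw [hmp]
          have h4 : (0:ℝ) ≤ (1/4:ℝ)^(n-t) := by positivity
          nlinarith [hbern, h4]
        have := mul_le_mul hxa (le_trans hlhs2 hpp) (by positivity) (by positivity)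
        linarith
      have hpoweq : (1/2:ℝ)^a * ((1/4:ℝ)^(n-t) * (1/2)) = (1/2:ℝ)^(n-1) * (1/2) := by
        have e : a + 2*(n-t) = n-1 := by omega
        rw [show (1/4:ℝ) = ((1/2:ℝ))^2 from by norm_num, ← pow_mul, ← mul_assoc, ← pow_add, e]
      linarith [step, hpoweq.symm.le]
    -- coefficient
    have hcoeff := coeff_lb n hn1
    have ht1eq : t - 1 = n/2 := by omega
    have hd : d x = ((n:ℝ) * ((n-1).choose (n/2))) * (x^(t-1)*(1-x)^(n-t)) := by
      simp only [hddef, ht1eq]; ring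
    rw [hd]
    have hfin := mul_le_mul (show (2:ℝ)^(n-1) * sq / 4 ≤ (n:ℝ) * ((n-1).choose (n/2)) from by linarith)
      hApow (by positivity) (by positivity)
    have : (2:ℝ)^(n-1) * sq / 4 * ((1/2:ℝ)^(n-1) * (1/2)) = sq/8 := by
      have h22 : (2:ℝ)^(n-1) * (1/2:ℝ)^(n-1) = 1 := by
        rw [← mul_pow]; norm_num
      nlinarith [h22]
    linarith
  -- MVT on [1/2, 1/2+δ]
  have hg1 : sq/8 * ((1/2+δ) - (1/2)) ≤ g (1/2+δ) - g (1/2) := by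
    apply (convex_Icc (1/2:ℝ) (1/2+δ)).mul_sub_le_image_sub_of_le_deriv
      (hgdiff.continuous.continuousOn) (hgdiff.differentiableOn)
      (fun x hx => by rw [hdval]; exact hdlb x (interior_subset hx))
      (1/2) (Set.left_mem_Icc.mpr (by linarith)) (1/2+δ)
      (Set.right_mem_Icc.mpr (by linarith)) (by linarith)
  -- monotone on [1/2+δ, 1/2+Δ]
  have hg2 : (0:ℝ) ≤ g (1/2+Δ) - g (1/2+δ) := by
    have := (convex_Icc (1/2+δ:ℝ) (1/2+Δ)).mul_sub_le_image_sub_of_le_deriv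
      (hgdiff.continuous.continuousOn) (hgdiff.differentiableOn)
      (fun x hx => by
        rw [hdval]
        have hx' := interior_subset hx
        obtain ⟨hxa', hxb'⟩ := hx'
        have hx0 : (0:ℝ) ≤ x := by linarith
        have h1x : (0:ℝ) ≤ 1 - x := by linarith
        simp only [hddef]
        positivity)
      (1/2+δ) (Set.left_mem_Icc.mpr (by linarith)) (1/2+Δ)
      (Set.right_mem_Icc.mpr (by linarith)) (by linarith)
    linarith [this]
  -- TV lower bound by tail difference
  have hsub : Finset.Ico t (n+1) ⊆ Finset.range (n+1) := by
    rw [Finset.range_eq_Ico]; exact Finset.Ico_subset_Ico (by omega) le_rfl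
  have htail : g (1/2+Δ) - g (1/2)
      ≤ ∑ k ∈ Finset.range (n+1), |binomPMF n (1/2) k - binomPMF n (1/2+Δ) k| := by
    have h1 : g (1/2+Δ) - g (1/2)
        ≤ ∑ k ∈ Finset.Ico t (n+1), |binomPMF n (1/2) k - binomPMF n (1/2+Δ) k| := by
      rw [hgdef, ← Finset.sum_sub_distrib]
      apply Finset.sum_le_sum
      intro k _
      simp only [binomPMF]
      rw [abs_sub_comm]
      exact le_abs_self _
    refine le_trans h1 (Finset.sum_le_sum_of_subset_of_nonneg hsub ?_)
    exact fun k _ _ => abs_nonneg _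
  -- final arithmetic
  have hmin : min (Δ * sq) 1 ≤ 2 * (δ * sq) := by
    rcases le_total Δ (1/(2*sq)) with h | h
    · have hδeq : δ = Δ := min_eq_left h
      have : min (Δ * sq) 1 ≤ Δ * sq := min_le_left _ _
      nlinarith
    · have hδeq : δ = 1/(2*sq) := min_eq_right h
      have : δ * sq = 1/2 := by rw [hδeq]; field_simp
      have h2 : min (Δ * sq) 1 ≤ 1 := min_le_right _ _
      linarith
  have hchain : sq/8 * δ ≤ g (1/2+Δ) - g (1/2) := by linarith
  calc (1:ℝ)/32 * min (Δ * sq) 1 ≤ 1/32 * (2 * (δ * sq)) := by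
        apply mul_le_mul_of_nonneg_left hmin (by norm_num)
    _ = (1/2) * (sq/8 * δ) := by ring
    _ ≤ (1/2) * (g (1/2+Δ) - g (1/2)) := by linarith
    _ ≤ (1/2) * ∑ k ∈ Finset.range (n+1), |binomPMF n (1/2) k - binomPMF n (1/2+Δ) k| := by
        linarith
end

section
/- Let π_ref be a probability distribution on Y = A^H (sequences of length H over a finite alphabet A), let τ : Y → ℝ_{≥0} be a tilt function with E_{π_ref}[τ] > 0, define π⋆(y) ∝ π_ref(y)·τ(y), and define the value function V⋆(y_{1:h}) = E_{π_ref}[τ(y_{1:H}) | y_{1:h}]. Then for every h ∈ [H] and every prefix y_{1:h} with π⋆(y_{1:h-1}) > 0, the conditional probability satisfies π⋆(y_h | y_{1:h-1}) = π_ref(y_h | y_{1:h-1}) · V⋆(y_{1:h}) / V⋆(y_{1:h-1}). -/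
open Finset

/-- The marginal probability that a sample from `μ` agrees with `y` on its first `h`
coordinates (the prefix marginal `μ(y_{1:h})`). -/
noncomputable def prefixMarg {H : ℕ} {A : Type*} [Fintype A] [DecidableEq A]
    (μ : (Fin H → A) → ℝ) (h : ℕ) (y : Fin H → A) : ℝ :=
  ∑ z : Fin H → A, if ∀ i : Fin H, (i : ℕ) < h → z i = y i then μ z else 0

/-- The value function `V⋆(y_{1:h}) = E_{π_ref}[τ(y_{1:H}) | y_{1:h}]`. -/
noncomputable def valueFn {H : ℕ} {A : Type*} [Fintype A] [DecidableEq A]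
    (πref τ : (Fin H → A) → ℝ) (h : ℕ) (y : Fin H → A) : ℝ :=
  (∑ z : Fin H → A, if ∀ i : Fin H, (i : ℕ) < h → z i = y i then πref z * τ z else 0) /
    prefixMarg πref h y

/-- **Value functions give the next-action conditionals of the tilted distribution.**
If `π⋆(y) ∝ π_ref(y)·τ(y)` and `V⋆(y_{1:h}) = E_{π_ref}[τ | y_{1:h}]`, then for every
`h ∈ [H]` and every prefix with `π⋆(y_{1:h-1}) > 0`,
`π⋆(y_h | y_{1:h-1}) = π_ref(y_h | y_{1:h-1}) · V⋆(y_{1:h}) / V⋆(y_{1:h-1})`. -/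
theorem value_density_ratio {H : ℕ} {A : Type*} [Fintype A] [DecidableEq A]
    (πref τ : (Fin H → A) → ℝ)
    (hπ : ∀ z, 0 ≤ πref z) (hπ1 : ∑ z, πref z = 1)
    (hτ : ∀ z, 0 ≤ τ z) (hτpos : 0 < ∑ z, πref z * τ z)
    (πstar : (Fin H → A) → ℝ)
    (hπstar : ∀ z, πstar z = πref z * τ z / ∑ z', πref z' * τ z')
    (h : ℕ) (hh1 : 1 ≤ h) (hhH : h ≤ H) (y : Fin H → A)
    (hpos : 0 < prefixMarg πstar (h - 1) y) :
    prefixMarg πstar h y / prefixMarg πstar (h - 1) y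
      = (prefixMarg πref h y / prefixMarg πref (h - 1) y) *
          (valueFn πref τ h y / valueFn πref τ (h - 1) y) := by
  classical
  set T : ℝ := ∑ z, πref z * τ z with hT
  set S : ℕ → ℝ := fun k => ∑ z : Fin H → A,
    if ∀ i : Fin H, (i : ℕ) < k → z i = y i then πref z * τ z else 0 with hSdef
  have key : ∀ k, prefixMarg πstar k y = S k / T := by
    intro k
    simp only [prefixMarg, hSdef, Finset.sum_div]
    refine Finset.sum_congr rfl fun z _ => ?_
    split <;> simp [hπstar]
  have hzero : ∀ k, prefixMarg πref k y = 0 → S k = 0 := by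
    intro k hk
    have h0 := (Finset.sum_eq_zero_iff_of_nonneg (fun z _ => by
      split <;> [exact hπ z; exact le_rfl])).mp hk
    refine Finset.sum_eq_zero fun z _ => ?_
    split
    case isTrue hz =>
      have := h0 z (Finset.mem_univ z)
      simp only [if_pos hz] at this
      rw [this]; ring
    case isFalse => rfl
  have hvalue : ∀ k, valueFn πref τ k y = S k / prefixMarg πref k y := fun k => rfl
  have hS1 : 0 < S (h - 1) := by
    have := key (h - 1) ▸ hpos
    have : 0 < S (h - 1) / T := this
    have h2 := mul_pos this hτpos
    rwa [div_mul_cancel₀ _ (ne_of_gt hτpos)] at h2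
  have hM1 : prefixMarg πref (h - 1) y ≠ 0 := fun hm => by
    have := hzero _ hm; linarith
  rw [key, key, hvalue, hvalue]
  by_cases hm : prefixMarg πref h y = 0
  · rw [hm, hzero h hm]
    simp
  · have hTne : T ≠ 0 := ne_of_gt hτpos
    field_simp
end

section
/- In the ABC example with ε = Θ(1), the product distribution π̂ exponentially undercovers π⋆: there exists a constant c > 0 (depending on ε) such that P_{y ~ π⋆}[π⋆(y)/π̂(y) > exp(c·H)] ≥ 1/2, where π⋆ is uniform on {a,b}^H and π̂ puts probability (1+ε)/(2+ε) on 'a' independently in each coordinate (H even). -/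
open Finset

/-- Counting lemma: at least half of all `y : Fin H → Bool` have at most `H/2` trues. -/
lemma half_count (H : ℕ) :
    2 ^ H ≤ 2 * (univ.filter (fun y : Fin H → Bool =>
      (univ.filter (fun i => y i)).card * 2 ≤ H)).card := by
  classical
  have hcardU : (univ : Finset (Fin H → Bool)).card = 2 ^ H := by
    simp [Finset.card_univ]
  have hcompl : (univ.filter (fun y : Fin H → Bool =>
      ¬ ((univ.filter (fun i => y i)).card * 2 ≤ H)))
      = (univ.filter (fun y : Fin H → Bool =>
      (univ.filter (fun i => y i)).card * 2 ≤ H))ᶜ := by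
    ext y; simp
  have hcc : (univ.filter (fun y : Fin H → Bool =>
      ¬ ((univ.filter (fun i => y i)).card * 2 ≤ H))).card
      = 2 ^ H - (univ.filter (fun y : Fin H → Bool =>
      (univ.filter (fun i => y i)).card * 2 ≤ H)).card := by
    rw [hcompl, Finset.card_compl]
    simp [hcardU]
  have hle : (univ.filter (fun y : Fin H → Bool =>
      (univ.filter (fun i => y i)).card * 2 ≤ H)).card ≤ 2 ^ H :=
    hcardU ▸ Finset.card_filter_le _ _
  have hinj : (univ.filter (fun y : Fin H → Bool =>
      ¬ ((univ.filter (fun i => y i)).card * 2 ≤ H))).card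
      ≤ (univ.filter (fun y : Fin H → Bool =>
      (univ.filter (fun i => y i)).card * 2 ≤ H)).card := by
    apply Finset.card_le_card_of_injOn (fun y => fun i => ! y i)
    · intro y hy
      simp only [Finset.mem_coe, Finset.mem_filter, Finset.mem_univ, true_and] at hy ⊢
      have hk : (univ.filter (fun i => y i)).card ≤ H := by
        simpa using Finset.card_filter_le univ (fun i => y i)
      have hcount : (univ.filter (fun i => ! y i)).card
          = H - (univ.filter (fun i => y i)).card := by
        have : (univ.filter (fun i => ! y i)) = (univ.filter (fun i => y i))ᶜ := by
          ext i; simp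
        rw [this, Finset.card_compl]
        simp
      rw [hcount]
      have hy' : H ≤ (univ.filter (fun i => y i)).card * 2 :=
        le_of_lt (Nat.lt_of_not_le hy)
      rw [Nat.sub_mul]
      apply Nat.sub_le_iff_le_add.mpr
      calc H * 2 = H + H := Nat.mul_two H
        _ ≤ H + (univ.filter (fun i => y i)).card * 2 := Nat.add_le_add_left hy' H
    · intro a _ b _ hab
      funext i
      have := congrFun hab i
      simpa using this
  calc 2 ^ H = (2 ^ H - (univ.filter (fun y : Fin H → Bool =>
          (univ.filter (fun i => y i)).card * 2 ≤ H)).card)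
        + (univ.filter (fun y : Fin H → Bool =>
          (univ.filter (fun i => y i)).card * 2 ≤ H)).card :=
        (Nat.sub_add_cancel hle).symm
    _ ≤ (univ.filter (fun y : Fin H → Bool =>
          (univ.filter (fun i => y i)).card * 2 ≤ H)).card
        + (univ.filter (fun y : Fin H → Bool =>
          (univ.filter (fun i => y i)).card * 2 ≤ H)).card :=
        Nat.add_le_add_right (hcc ▸ hinj) _
    _ = 2 * (univ.filter (fun y : Fin H → Bool =>
          (univ.filter (fun i => y i)).card * 2 ≤ H)).card := (Nat.two_mul _).symm

/-- **Exponential undercoverage in the ABC example.** Fix `ε ∈ (0,1)`. Let `π⋆` be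
uniform on `{a,b}^H` (with `{a,b} = Bool`, `a = true`) and let `π̂` put probability
`(1+ε)/(2+ε)` on `a` independently in each coordinate. Then there is a constant
`c > 0` (depending on `ε`) such that for every even `H > 0`,
`P_{y ~ π⋆}[π⋆(y)/π̂(y) > exp(c·H)] ≥ 1/2`. -/
theorem abc_undercoverage (ε : ℝ) (hε : 0 < ε) (hε1 : ε < 1) :
    ∃ c > (0 : ℝ), ∀ H : ℕ, 0 < H → Even H →
      (1 / 2 : ℝ) ≤
        ∑ y : Fin H → Bool,
          if Real.exp (c * H) <
              ((1 / 2 : ℝ) ^ H) / (∏ i, (if y i then (1 + ε) / (2 + ε) else 1 / (2 + ε)))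
          then (1 / 2 : ℝ) ^ H else 0 := by
  classical
  set δ : ℝ := ε ^ 2 / (4 * (1 + ε)) with hδdef
  have hδpos : 0 < δ := by positivity
  set s : ℝ := 1 + δ / 2 with hsdef
  have hs1 : 1 < s := by simp [hsdef]; positivity
  refine ⟨Real.log s / 2, div_pos (Real.log_pos hs1) two_pos, ?_⟩
  intro H hH hHeven
  obtain ⟨m, hm⟩ := hHeven
  have hH2m : H = 2 * m := by omega
  have hmpos : 0 < m := by omega
  have h2ε : (0:ℝ) < 2 + ε := by linarith
  have h1ε : (0:ℝ) < 1 + ε := by linarith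
  -- key analytic inequality for y with at most m trues
  have hkey : ∀ y : Fin H → Bool, (univ.filter (fun i => y i)).card * 2 ≤ H →
      Real.exp (Real.log s / 2 * H) <
        ((1 / 2 : ℝ) ^ H) / (∏ i, (if y i then (1 + ε) / (2 + ε) else 1 / (2 + ε))) := by
    intro y hy
    set k := (univ.filter (fun i => y i)).card with hk
    have hkm : k ≤ m := by omega
    have hprod : (∏ i, (if y i then (1 + ε) / (2 + ε) else 1 / (2 + ε)))
        = (1 + ε) ^ k / (2 + ε) ^ H := by
      have : ∀ i, (if y i then (1 + ε) / (2 + ε) else 1 / (2 + ε))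
          = (if y i then (1 + ε) else 1) * (2 + ε)⁻¹ := by
        intro i; by_cases h : y i <;> simp [h, div_eq_mul_inv]
      rw [Finset.prod_congr rfl (fun i _ => this i), Finset.prod_mul_distrib,
        Finset.prod_const, ← Finset.prod_filter, Finset.prod_const]
      simp [hk, div_eq_mul_inv, Finset.card_univ]
    rw [hprod]
    have hprodpos : (0:ℝ) < (1 + ε) ^ k / (2 + ε) ^ H := by positivity
    rw [lt_div_iff₀ hprodpos]
    have hexp : Real.exp (Real.log s / 2 * H) = s ^ m := by
      rw [hH2m]
      push_cast
      rw [show Real.log s / 2 * (2 * (m:ℝ)) = (m:ℝ) * Real.log s by ring,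
        Real.exp_nat_mul, Real.exp_log (by linarith)]
    rw [hexp]
    -- goal: s^m * ((1+ε)^k / (2+ε)^H) < (1/2)^H
    have hident : (1 + δ) * (1 + ε) = ((2 + ε) / 2) ^ 2 := by
      rw [hδdef]
      field_simp [hδdef]
      ring
    have hmain : s ^ m * (1 + ε) ^ k < ((2 + ε) / 2) ^ H := by
      calc s ^ m * (1 + ε) ^ k ≤ s ^ m * (1 + ε) ^ m := by
            apply mul_le_mul_of_nonneg_left (pow_le_pow_right₀ (by linarith) hkm)
            positivity
        _ < (1 + δ) ^ m * (1 + ε) ^ m := by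
            apply mul_lt_mul_of_pos_right _ (by positivity)
            exact pow_lt_pow_left₀ (by simp [hsdef]; linarith) (by positivity) (by omega)
        _ = (((2 + ε) / 2) ^ 2) ^ m := by rw [← mul_pow, hident]
        _ = ((2 + ε) / 2) ^ H := by rw [← pow_mul, hH2m, Nat.mul_comm]
    have h2εH : (0:ℝ) < (2 + ε) ^ H := by positivity
    rw [div_pow] at hmain
    rw [div_eq_mul_inv, ← mul_assoc]
    calc s ^ m * (1 + ε) ^ k * ((2 + ε) ^ H)⁻¹
        < (2 + ε) ^ H / 2 ^ H * ((2 + ε) ^ H)⁻¹ := by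
          apply mul_lt_mul_of_pos_right hmain (by positivity)
      _ = (1/2:ℝ) ^ H := by
          rw [div_pow]
          field_simp
          ring
  -- lower bound the sum by the sum over y with at most m trues
  have hsum : ∑ y : Fin H → Bool,
      (if (univ.filter (fun i => y i)).card * 2 ≤ H then (1 / 2 : ℝ) ^ H else 0)
      ≤ ∑ y : Fin H → Bool,
        (if Real.exp (Real.log s / 2 * H) <
            ((1 / 2 : ℝ) ^ H) / (∏ i, (if y i then (1 + ε) / (2 + ε) else 1 / (2 + ε)))
        then (1 / 2 : ℝ) ^ H else 0) := by
    apply Finset.sum_le_sum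
    intro y _
    by_cases h : (univ.filter (fun i => y i)).card * 2 ≤ H
    · rw [if_pos h, if_pos (hkey y h)]
    · rw [if_neg h]
      positivity
  refine le_trans ?_ hsum
  rw [← Finset.sum_filter, Finset.sum_const, nsmul_eq_mul]
  have hcount := half_count H
  have : ((2:ℝ) ^ H) / 2 ≤ ((univ.filter (fun y : Fin H → Bool =>
      (univ.filter (fun i => y i)).card * 2 ≤ H)).card : ℝ) := by
    rw [div_le_iff₀ (by norm_num)]
    exact_mod_cast by linarith [hcount]
  calc (1/2:ℝ) = ((2:ℝ)^H / 2) * (1/2)^H := by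
        rw [div_pow]
        field_simp
        rw [one_pow]
    _ ≤ _ := by
        apply mul_le_mul_of_nonneg_right this (by positivity)
end

section
/- Consider the tree random walk of VGB with edge weights f(y_{1:h−1}, y_{1:h}) = π_ref(y_{1:h})·V̂(y_{1:h}) and stationary distribution μ(v) ∝ Σ_{w~v} f(v,w). Suppose the approximate value function V̂ satisfies 1/κ ≤ V̂(y_{1:h})/V⋆(y_{1:h}) ≤ κ for all prefixes with V⋆(y_{1:h}) > 0 (with the convention that both vanish together). Then the stationary distribution μ places mass at least 1/(2κ²H) on the root and mass at least 1/(2κ²H) on the set of leaves A^H. -/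
open Finset
open scoped Classical

/-- A node of the autoregressive tree over alphabet `A` with depth `H`:
a level `h ≤ H` together with a sequence `y_{1:h} ∈ A^h`. -/
abbrev TreeNode (H : ℕ) (A : Type*) := Σ h : Fin (H + 1), (Fin (h : ℕ) → A)

/-- `p` is the parent of `c` in the autoregressive tree. -/
def IsParent {H : ℕ} {A : Type*} (p c : TreeNode H A) : Prop :=
  ∃ hc : (c.1 : ℕ) = (p.1 : ℕ) + 1,
    ∀ i : Fin (p.1 : ℕ), p.2 i = c.2 (Fin.castLE (by omega) i)

/-- The marginal probability `π_ref(y_{1:h})` of the prefix given by node `v`. -/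
noncomputable def nodeMarg {H : ℕ} {A : Type*} [Fintype A]
    (πref : (Fin H → A) → ℝ) (v : TreeNode H A) : ℝ :=
  ∑ z : Fin H → A,
    if ∀ i : Fin (v.1 : ℕ), z (Fin.castLE (Nat.lt_succ_iff.mp v.1.isLt) i) = v.2 i
    then πref z else 0

/-- The unnormalized value `π_ref(y_{1:h})·V⋆(y_{1:h}) = ∑_{extensions} π_ref·τ`. -/
noncomputable def nodeVnum {H : ℕ} {A : Type*} [Fintype A]
    (πref τ : (Fin H → A) → ℝ) (v : TreeNode H A) : ℝ :=
  ∑ z : Fin H → A,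
    if ∀ i : Fin (v.1 : ℕ), z (Fin.castLE (Nat.lt_succ_iff.mp v.1.isLt) i) = v.2 i
    then πref z * τ z else 0

/-- The true value function `V⋆(y_{1:h}) = E_{π_ref}[τ | y_{1:h}]` at node `v`. -/
noncomputable def nodeVstar {H : ℕ} {A : Type*} [Fintype A]
    (πref τ : (Fin H → A) → ℝ) (v : TreeNode H A) : ℝ :=
  nodeVnum πref τ v / nodeMarg πref v

/-- The total edge weight incident to node `v`, for the VGB edge weights
`f(y_{1:h−1}, y_{1:h}) = π_ref(y_{1:h})·V̂(y_{1:h})`: the weight of the edge to the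
parent of `v` (if `v` is not the root) plus the weights of the edges to the
children of `v`. -/
noncomputable def nodeS {H : ℕ} {A : Type*} [Fintype A]
    (πref : (Fin H → A) → ℝ) (Vhat : TreeNode H A → ℝ) (v : TreeNode H A) : ℝ :=
  (if (v.1 : ℕ) = 0 then 0 else nodeMarg πref v * Vhat v) +
    ∑ u : TreeNode H A, if IsParent v u then nodeMarg πref u * Vhat u else 0

/-- The stationary distribution `μ(v) ∝ ∑_{w ~ v} f(v,w)` of the VGB random walk. -/
noncomputable def nodeMu {H : ℕ} {A : Type*} [Fintype A]
    (πref : (Fin H → A) → ℝ) (Vhat : TreeNode H A → ℝ) (v : TreeNode H A) : ℝ :=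
  nodeS πref Vhat v / ∑ u : TreeNode H A, nodeS πref Vhat u

section Aux
variable {H : ℕ} {A : Type*} [Fintype A]

lemma marg_nonneg (πref : (Fin H → A) → ℝ) (hπ : ∀ z, 0 ≤ πref z) (v : TreeNode H A) :
    0 ≤ nodeMarg πref v := by
  unfold nodeMarg
  apply Finset.sum_nonneg
  intro z _
  split_ifs
  · exact hπ z
  · exact le_rfl

lemma vnum_nonneg (πref τ : (Fin H → A) → ℝ) (hπ : ∀ z, 0 ≤ πref z)
    (hτ : ∀ z, 0 ≤ τ z) (v : TreeNode H A) :
    0 ≤ nodeVnum πref τ v := by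
  unfold nodeVnum
  apply Finset.sum_nonneg
  intro z _
  split_ifs
  · exact mul_nonneg (hπ z) (hτ z)
  · exact le_rfl

lemma vnum_eq_zero_of_marg (πref τ : (Fin H → A) → ℝ) (hπ : ∀ z, 0 ≤ πref z)
    (v : TreeNode H A) (hm : nodeMarg πref v = 0) : nodeVnum πref τ v = 0 := by
  unfold nodeMarg at hm
  unfold nodeVnum
  apply Finset.sum_eq_zero
  intro z _
  split_ifs with h
  · have hz := (Finset.sum_eq_zero_iff_of_nonneg (fun z _ => by
      split_ifs; exacts [hπ z, le_rfl])).mp hm z (Finset.mem_univ z)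
    rw [if_pos h] at hz
    rw [hz, zero_mul]
  · rfl

lemma sum_level (πref τ : (Fin H → A) → ℝ) (h : Fin (H + 1)) :
    ∑ v : TreeNode H A, (if (v.1 : ℕ) = (h : ℕ) then nodeVnum πref τ v else 0)
      = ∑ z, πref z * τ z := by
  rw [← Finset.univ_sigma_univ, Finset.sum_sigma]
  have step1 : ∀ h' : Fin (H + 1),
      (∑ y : Fin (h' : ℕ) → A,
        if ((⟨h', y⟩ : TreeNode H A).1 : ℕ) = (h : ℕ) then nodeVnum πref τ ⟨h', y⟩ else 0)
      = if h' = h then ∑ y : Fin (h' : ℕ) → A, nodeVnum πref τ ⟨h', y⟩ else 0 := by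
    intro h'
    split_ifs with hh
    · apply Finset.sum_congr rfl
      intro y _
      exact if_pos (congrArg Fin.val hh)
    · apply Finset.sum_eq_zero
      intro y _
      rw [if_neg (fun hv => hh (Fin.ext hv))]
  rw [Finset.sum_congr rfl (fun h' _ => step1 h'), Finset.sum_ite_eq' Finset.univ h,
    if_pos (Finset.mem_univ h)]
  unfold nodeVnum
  rw [Finset.sum_comm]
  apply Finset.sum_congr rfl
  intro z _
  rw [Finset.sum_eq_single (fun i : Fin (h : ℕ) =>
      z (Fin.castLE (Nat.lt_succ_iff.mp h.isLt) i))]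
  · rw [if_pos (fun i => rfl)]
  · intro y _ hy
    rw [if_neg]
    intro hcond
    exact hy (funext fun i => (hcond i).symm)
  · intro hmem; exact absurd (Finset.mem_univ _) hmem

lemma parent_sum (u : TreeNode H A) (c : ℝ) :
    ∑ v : TreeNode H A, (if IsParent v u then c else 0)
      = if (u.1 : ℕ) = 0 then 0 else c := by
  split_ifs with h0
  · apply Finset.sum_eq_zero
    intro v _
    rw [if_neg]
    rintro ⟨hc, -⟩
    omega
  · have hlt : (u.1 : ℕ) - 1 < H + 1 := by omega
    have hle : (u.1 : ℕ) - 1 ≤ (u.1 : ℕ) := by omega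
    set p : TreeNode H A :=
      ⟨⟨(u.1 : ℕ) - 1, hlt⟩, fun i => u.2 (Fin.castLE hle i)⟩ with hp
    rw [Finset.sum_eq_single p]
    · rw [if_pos]
      exact ⟨by simp [hp]; omega, fun i => rfl⟩
    · rintro ⟨⟨l, hl⟩, y⟩ _ hne
      rw [if_neg]
      rintro ⟨hc, hrest⟩
      apply hne
      have hl0 : l = (u.1 : ℕ) - 1 := by
        simp only [] at hc; omega
      subst hl0
      exact Sigma.ext rfl (heq_of_eq (funext fun i => hrest i))
    · intro hmem; exact absurd (Finset.mem_univ _) hmem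

def rootNode (H : ℕ) (A : Type*) : TreeNode H A :=
  ⟨⟨0, Nat.succ_pos H⟩, fun i => i.elim0⟩

lemma root_sum (f : TreeNode H A → ℝ) :
    ∑ v : TreeNode H A, (if (v.1 : ℕ) = 0 then f v else 0) = f (rootNode H A) := by
  rw [Finset.sum_eq_single (rootNode H A)]
  · exact if_pos rfl
  · rintro ⟨⟨l, hl⟩, y⟩ _ hne
    rw [if_neg]
    intro h0
    apply hne
    have hl0 : l = 0 := h0
    subst hl0
    exact Sigma.ext rfl (heq_of_eq (funext fun i => i.elim0))
  · intro hmem; exact absurd (Finset.mem_univ _) hmem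

lemma isParent_root (u : TreeNode H A) :
    IsParent (rootNode H A) u ↔ (u.1 : ℕ) = 1 := by
  constructor
  · rintro ⟨hc, -⟩
    exact hc
  · intro h
    exact ⟨h, fun i => i.elim0⟩

lemma no_child (v : TreeNode H A) (hv : (v.1 : ℕ) = H) (u : TreeNode H A) :
    ¬ IsParent v u := by
  rintro ⟨hc, -⟩
  have := u.1.isLt
  omega

lemma sandwich (κ : ℝ) (hκ : 1 ≤ κ) (πref τ : (Fin H → A) → ℝ)
    (hπ : ∀ z, 0 ≤ πref z) (hτ : ∀ z, 0 ≤ τ z)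
    (Vhat : TreeNode H A → ℝ)
    (hVhat : ∀ v : TreeNode H A, 1 ≤ (v.1 : ℕ) →
      ((0 < nodeVstar πref τ v →
          nodeVstar πref τ v / κ ≤ Vhat v ∧ Vhat v ≤ κ * nodeVstar πref τ v) ∧
        (nodeVstar πref τ v = 0 → Vhat v = 0)))
    (v : TreeNode H A) (hv : 1 ≤ (v.1 : ℕ)) :
    nodeVnum πref τ v / κ ≤ nodeMarg πref v * Vhat v ∧
      nodeMarg πref v * Vhat v ≤ κ * nodeVnum πref τ v := by
  have hκ0 : (0:ℝ) < κ := lt_of_lt_of_le one_pos hκ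
  have hm := marg_nonneg πref hπ v
  have hn := vnum_nonneg πref τ hπ hτ v
  rcases eq_or_lt_of_le hn with h0 | hpos
  · have hstar : nodeVstar πref τ v = 0 := by
      unfold nodeVstar; rw [← h0, zero_div]
    have hhat := (hVhat v hv).2 hstar
    rw [hhat, mul_zero, ← h0, zero_div, mul_zero]
    exact ⟨le_rfl, le_rfl⟩
  · have hmpos : 0 < nodeMarg πref v := by
      rcases eq_or_lt_of_le hm with h | h
      · exact absurd (vnum_eq_zero_of_marg πref τ hπ v h.symm) (ne_of_gt hpos)
      · exact h
    have hstarpos : 0 < nodeVstar πref τ v := div_pos hpos hmpos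
    obtain ⟨h1, h2⟩ := (hVhat v hv).1 hstarpos
    have hkey : nodeMarg πref v * nodeVstar πref τ v = nodeVnum πref τ v := by
      unfold nodeVstar
      field_simp
    constructor
    · have := mul_le_mul_of_nonneg_left h1 hm
      calc nodeVnum πref τ v / κ
          = nodeMarg πref v * (nodeVstar πref τ v / κ) := by
            rw [← hkey]; ring
        _ ≤ nodeMarg πref v * Vhat v := this
    · have := mul_le_mul_of_nonneg_left h2 hm
      calc nodeMarg πref v * Vhat v
          ≤ nodeMarg πref v * (κ * nodeVstar πref τ v) := this
        _ = κ * nodeVnum πref τ v := by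
            rw [← hkey]; ring

lemma mu_sum (πref : (Fin H → A) → ℝ) (Vhat : TreeNode H A → ℝ)
    (P : TreeNode H A → Prop) [DecidablePred P] :
    ∑ v : TreeNode H A, (if P v then nodeMu πref Vhat v else 0)
      = (∑ v : TreeNode H A, if P v then nodeS πref Vhat v else 0)
          / ∑ u : TreeNode H A, nodeS πref Vhat u := by
  rw [Finset.sum_div]
  apply Finset.sum_congr rfl
  intro v _
  unfold nodeMu
  split_ifs
  · rfl
  · rw [zero_div]

end Aux

/-- **Root and leaf mass of the VGB stationary distribution.** If the approximate
value function `V̂` is `κ`-multiplicatively accurate (`V⋆/κ ≤ V̂ ≤ κ·V⋆` whenever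
`V⋆ > 0`, both vanishing together), then the stationary distribution `μ` of the VGB
tree walk places mass at least `1/(2κ²H)` on the root and at least `1/(2κ²H)` on the
set of leaves `A^H`. -/
theorem vgb_root_leaf_mass {H : ℕ} {A : Type*} [Fintype A]
    (hH : 1 ≤ H) (κ : ℝ) (hκ : 1 ≤ κ)
    (πref τ : (Fin H → A) → ℝ)
    (hπ : ∀ z, 0 ≤ πref z) (hπ1 : ∑ z, πref z = 1)
    (hτ : ∀ z, 0 ≤ τ z) (hτpos : 0 < ∑ z, πref z * τ z)
    (Vhat : TreeNode H A → ℝ)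
    (hVhat : ∀ v : TreeNode H A, 1 ≤ (v.1 : ℕ) →
      ((0 < nodeVstar πref τ v →
          nodeVstar πref τ v / κ ≤ Vhat v ∧ Vhat v ≤ κ * nodeVstar πref τ v) ∧
        (nodeVstar πref τ v = 0 → Vhat v = 0))) :
    1 / (2 * κ ^ 2 * H) ≤
        (∑ v : TreeNode H A, if (v.1 : ℕ) = 0 then nodeMu πref Vhat v else 0) ∧
    1 / (2 * κ ^ 2 * H) ≤
        (∑ v : TreeNode H A, if (v.1 : ℕ) = H then nodeMu πref Vhat v else 0) := by
  have hκ0 : (0:ℝ) < κ := lt_of_lt_of_le one_pos hκ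
  have hH0 : (0:ℝ) < (H:ℝ) := by exact_mod_cast hH
  set Z := ∑ z, πref z * τ z with hZdef
  have hZ : 0 < Z := hτpos
  -- sum of nodeVnum over all nodes
  have h1 : ∀ v : TreeNode H A, nodeVnum πref τ v
      = ∑ h : Fin (H + 1), if (v.1 : ℕ) = (h : ℕ) then nodeVnum πref τ v else 0 := by
    intro v
    rw [Finset.sum_eq_single v.1]
    · rw [if_pos rfl]
    · intro h _ hne
      rw [if_neg (fun hv => hne ((Fin.ext hv).symm))]
    · intro hmem; exact absurd (Finset.mem_univ _) hmem
  have hall : ∑ v : TreeNode H A, nodeVnum πref τ v = ((H:ℝ) + 1) * Z := by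
    calc ∑ v : TreeNode H A, nodeVnum πref τ v
        = ∑ v : TreeNode H A, ∑ h : Fin (H + 1),
            (if (v.1 : ℕ) = (h : ℕ) then nodeVnum πref τ v else 0) :=
          Finset.sum_congr rfl (fun v _ => h1 v)
      _ = ∑ h : Fin (H + 1), ∑ v : TreeNode H A,
            (if (v.1 : ℕ) = (h : ℕ) then nodeVnum πref τ v else 0) := Finset.sum_comm
      _ = ∑ _h : Fin (H + 1), Z := Finset.sum_congr rfl (fun h _ => sum_level πref τ h)
      _ = ((H:ℝ) + 1) * Z := by
          rw [Finset.sum_const, Finset.card_univ, Fintype.card_fin, nsmul_eq_mul]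
          push_cast; ring
  have hlvl0 : ∑ v : TreeNode H A, (if (v.1 : ℕ) = 0 then nodeVnum πref τ v else 0) = Z :=
    sum_level πref τ ⟨0, Nat.succ_pos H⟩
  have hsplit : ∀ g : TreeNode H A → ℝ,
      ∑ v : TreeNode H A, (if (v.1 : ℕ) = 0 then 0 else g v)
        = (∑ v : TreeNode H A, g v) - ∑ v : TreeNode H A, (if (v.1 : ℕ) = 0 then g v else 0) := by
    intro g
    rw [← Finset.sum_sub_distrib]
    apply Finset.sum_congr rfl
    intro v _
    split_ifs <;> ring
  set T := ∑ v : TreeNode H A, (if (v.1 : ℕ) = 0 then 0 else nodeMarg πref v * Vhat v) with hTdef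
  have hTub : T ≤ κ * ((H:ℝ) * Z) := by
    calc T ≤ ∑ v : TreeNode H A, (if (v.1 : ℕ) = 0 then 0 else κ * nodeVnum πref τ v) := by
          apply Finset.sum_le_sum
          intro v _
          split_ifs with h
          · exact le_rfl
          · exact (sandwich κ hκ πref τ hπ hτ Vhat hVhat v (by omega)).2
      _ = κ * ((H:ℝ) * Z) := by
          have heq : ∀ v : TreeNode H A,
              (if (v.1 : ℕ) = 0 then (0:ℝ) else κ * nodeVnum πref τ v)
                = κ * (if (v.1 : ℕ) = 0 then 0 else nodeVnum πref τ v) := by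
            intro v; split_ifs <;> ring
          rw [Finset.sum_congr rfl (fun v _ => heq v), ← Finset.mul_sum, hsplit, hall, hlvl0]
          ring
  have hTlb : ((H:ℝ) * Z) / κ ≤ T := by
    have heq : ∀ v : TreeNode H A,
        (if (v.1 : ℕ) = 0 then (0:ℝ) else nodeVnum πref τ v / κ)
          = (if (v.1 : ℕ) = 0 then 0 else nodeVnum πref τ v) / κ := by
      intro v; split_ifs
      · rw [zero_div]
      · rfl
    calc ((H:ℝ) * Z) / κ
        = (∑ v : TreeNode H A, (if (v.1 : ℕ) = 0 then 0 else nodeVnum πref τ v)) / κ := by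
          rw [hsplit, hall, hlvl0]; ring_nf
      _ = ∑ v : TreeNode H A, (if (v.1 : ℕ) = 0 then 0 else nodeVnum πref τ v / κ) := by
          rw [Finset.sum_congr rfl (fun v _ => heq v), ← Finset.sum_div]
      _ ≤ T := by
          apply Finset.sum_le_sum
          intro v _
          split_ifs with h
          · exact le_rfl
          · exact (sandwich κ hκ πref τ hπ hτ Vhat hVhat v (by omega)).1
  have hTpos : 0 < T :=
    lt_of_lt_of_le (div_pos (mul_pos hH0 hZ) hκ0) hTlb
  have htot : ∑ u : TreeNode H A, nodeS πref Vhat u = 2 * T := by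
    unfold nodeS
    rw [Finset.sum_add_distrib]
    have hB : ∑ v : TreeNode H A, ∑ u : TreeNode H A,
        (if IsParent v u then nodeMarg πref u * Vhat u else 0)
        = ∑ u : TreeNode H A, (if (u.1 : ℕ) = 0 then 0 else nodeMarg πref u * Vhat u) := by
      rw [Finset.sum_comm]
      exact Finset.sum_congr rfl (fun u _ => parent_sum u _)
    rw [hB, hTdef]
    ring
  -- root numerator
  have hrootS : ∑ v : TreeNode H A, (if (v.1 : ℕ) = 0 then nodeS πref Vhat v else 0)
      = ∑ u : TreeNode H A, (if (u.1 : ℕ) = 1 then nodeMarg πref u * Vhat u else 0) := by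
    rw [root_sum (nodeS πref Vhat)]
    unfold nodeS
    rw [show (if ((rootNode H A).1 : ℕ) = 0 then (0:ℝ)
        else nodeMarg πref (rootNode H A) * Vhat (rootNode H A)) = 0 from if_pos rfl, zero_add]
    exact Finset.sum_congr rfl (fun u _ => if_congr (isParent_root u) rfl rfl)
  have hlvl1 : ∑ u : TreeNode H A, (if (u.1 : ℕ) = 1 then nodeVnum πref τ u else 0) = Z :=
    sum_level πref τ ⟨1, by omega⟩
  have hlb_gen : ∀ (k : ℕ), 1 ≤ k →
      (∑ u : TreeNode H A, (if (u.1 : ℕ) = k then nodeVnum πref τ u else 0) = Z) →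
      Z / κ ≤ ∑ u : TreeNode H A, (if (u.1 : ℕ) = k then nodeMarg πref u * Vhat u else 0) := by
    intro k hk hsum
    have heq : ∀ u : TreeNode H A,
        (if (u.1 : ℕ) = k then nodeVnum πref τ u / κ else (0:ℝ))
          = (if (u.1 : ℕ) = k then nodeVnum πref τ u else 0) / κ := by
      intro u; split_ifs
      · rfl
      · rw [zero_div]
    calc Z / κ
        = ∑ u : TreeNode H A, (if (u.1 : ℕ) = k then nodeVnum πref τ u / κ else 0) := by
          rw [Finset.sum_congr rfl (fun u _ => heq u), ← Finset.sum_div, hsum]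
      _ ≤ _ := by
          apply Finset.sum_le_sum
          intro u _
          split_ifs with h
          · exact (sandwich κ hκ πref τ hπ hτ Vhat hVhat u (by omega)).1
          · exact le_rfl
  have hroot_lb : Z / κ ≤ ∑ v : TreeNode H A, (if (v.1 : ℕ) = 0 then nodeS πref Vhat v else 0) := by
    rw [hrootS]
    exact hlb_gen 1 le_rfl hlvl1
  -- leaf numerator
  have hlvlH : ∑ u : TreeNode H A, (if (u.1 : ℕ) = H then nodeVnum πref τ u else 0) = Z :=
    sum_level πref τ ⟨H, by omega⟩
  have hleaf_lb : Z / κ ≤ ∑ v : TreeNode H A, (if (v.1 : ℕ) = H then nodeS πref Vhat v else 0) := by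
    have hSleaf : ∀ v : TreeNode H A, (v.1 : ℕ) = H →
        nodeS πref Vhat v = nodeMarg πref v * Vhat v := by
      intro v hv
      unfold nodeS
      rw [if_neg (by omega),
        Finset.sum_eq_zero (fun u _ => if_neg (no_child v hv u)), add_zero]
    have : ∑ v : TreeNode H A, (if (v.1 : ℕ) = H then nodeS πref Vhat v else 0)
        = ∑ v : TreeNode H A, (if (v.1 : ℕ) = H then nodeMarg πref v * Vhat v else 0) := by
      apply Finset.sum_congr rfl
      intro v _
      split_ifs with h
      · exact hSleaf v h
      · rfl
    rw [this]
    exact hlb_gen H hH hlvlH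
  -- final numeric step
  have hfinal : ∀ N : ℝ, Z / κ ≤ N → 1 / (2 * κ ^ 2 * (H:ℝ)) ≤ N / (2 * T) := by
    intro N hN
    have h2T : (0:ℝ) < 2 * T := by linarith
    have hb : 2 * T ≤ 2 * (κ * ((H:ℝ) * Z)) := by linarith
    have hkey : (Z / κ) / (2 * (κ * ((H:ℝ) * Z))) = 1 / (2 * κ ^ 2 * (H:ℝ)) := by
      field_simp
    calc 1 / (2 * κ ^ 2 * (H:ℝ)) = (Z / κ) / (2 * (κ * ((H:ℝ) * Z))) := hkey.symm
      _ ≤ N / (2 * T) :=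
          div_le_div₀ (le_trans (div_nonneg hZ.le hκ0.le) hN) hN h2T hb
  constructor
  · rw [mu_sum πref Vhat (fun v => (v.1 : ℕ) = 0), htot]
    exact hfinal _ hroot_lb
  · rw [mu_sum πref Vhat (fun v => (v.1 : ℕ) = H), htot]
    exact hfinal _ hleaf_lb
end

section
/- Let P be a lazy reversible ergodic Markov chain with stationary distribution μ on a finite state space, started at the point mass ν_0 on a state z with μ(z) > 0, and let ν_r = ν_0 P^r. Then for any T ∈ ℕ, Σ_{r=0}^{T−1} E(ν_r/μ, ν_r/μ) ≤ 2·χ²(ν_0 ‖ μ) ≤ 2/μ(z), where E(g,g) = Σ_{u,v} μ(u)·P(v|u)·(g(u)−g(v))² is the Dirichlet form. -/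
open Finset

/-- Jensen for a probability vector: `(∑ p g)² ≤ ∑ p g²`. -/
lemma jensen_sq_aux {V : Type*} [Fintype V] (p g : V → ℝ) (hp : ∀ v, 0 ≤ p v)
    (hp1 : ∑ v, p v = 1) : (∑ v, p v * g v) ^ 2 ≤ ∑ v, p v * g v ^ 2 := by
  have h := Finset.sum_mul_sq_le_sq_mul_sq Finset.univ
      (fun v => Real.sqrt (p v)) (fun v => Real.sqrt (p v) * g v)
  have h1 : ∀ v : V, Real.sqrt (p v) * (Real.sqrt (p v) * g v) = p v * g v := by
    intro v; rw [← mul_assoc, Real.mul_self_sqrt (hp v)]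
  have h2 : ∀ v : V, Real.sqrt (p v) ^ 2 = p v := fun v => Real.sq_sqrt (hp v)
  have h3 : ∀ v : V, (Real.sqrt (p v) * g v) ^ 2 = p v * g v ^ 2 := by
    intro v; rw [mul_pow, h2]
  simp only [h1, h2, h3, hp1, one_mul] at h
  exact h

/-- **Total Dirichlet energy bound for lazy reversible chains.** Let
`P = (1/2)(I + P')` be a lazy Markov kernel on a finite state space, reversible and
ergodic (irreducible) with stationary probability distribution `μ`, started at the
point mass on a state `z` with `μ(z) > 0`, and let `ν_r = ν_0 Pʳ` (so
`ν_r(v) = (Pʳ)_{z v}`). Then for any `T`,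
`∑_{r=0}^{T−1} E(ν_r/μ, ν_r/μ) ≤ 2·χ²(ν_0 ‖ μ) ≤ 2/μ(z)`, where
`E(g,g) = ∑_{u,v} μ(u)·P(v|u)·(g(u)−g(v))²` is the Dirichlet form and
`χ²(ν‖μ) = ∑_v μ(v)·(ν(v)/μ(v))² − 1`. -/
theorem total_dirichlet_energy_bound {V : Type*} [Fintype V] [DecidableEq V]
    (P P' : V → V → ℝ) (μ : V → ℝ)
    (hμ : ∀ v, 0 ≤ μ v) (hμ1 : ∑ v, μ v = 1)
    (hP'nn : ∀ x y, 0 ≤ P' x y) (hP'1 : ∀ x, ∑ y, P' x y = 1)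
    (hlazy : ∀ x y, P x y = (1 / 2) * ((if x = y then (1 : ℝ) else 0) + P' x y))
    (hrev : ∀ x y, μ x * P x y = μ y * P y x)
    (hirr : ∀ u v, ∃ t : ℕ, 0 < ((Matrix.of P) ^ t) u v)
    (z : V) (hz : 0 < μ z) (T : ℕ) :
    (∑ r ∈ Finset.range T, ∑ u, ∑ v,
        μ u * P u v *
          ((((Matrix.of P) ^ r) z u) / μ u - (((Matrix.of P) ^ r) z v) / μ v) ^ 2)
      ≤ 2 * ((∑ v, μ v * ((if v = z then (1 : ℝ) else 0) / μ v) ^ 2) - 1) ∧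
    2 * ((∑ v, μ v * ((if v = z then (1 : ℝ) else 0) / μ v) ^ 2) - 1) ≤ 2 / μ z := by
  set M := Matrix.of P with hM
  have hMapp : ∀ x y, M x y = P x y := fun _ _ => rfl
  have hP1 : ∀ x, ∑ y, P x y = 1 := by
    intro x
    simp_rw [hlazy x]
    rw [← Finset.mul_sum, Finset.sum_add_distrib, hP'1]
    simp
    norm_num
  have hrev' : ∀ x y, μ x * P' x y = μ y * P' y x := by
    intro x y
    have h := hrev x y
    rw [hlazy x y, hlazy y x] at h
    rcases eq_or_ne x y with rfl | hne
    · rfl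
    · simp only [if_neg hne, if_neg (Ne.symm hne)] at h
      linarith
  have hstat : ∀ y, ∑ u, μ u * P u y = μ y := by
    intro y
    simp_rw [fun u => hrev u y, ← Finset.mul_sum, hP1, mul_one]
  have hstat' : ∀ y, ∑ u, μ u * P' u y = μ y := by
    intro y
    simp_rw [fun u => hrev' u y, ← Finset.mul_sum, hP'1, mul_one]
  have hrevt : ∀ (t : ℕ) (x y : V), μ x * (M ^ t) x y = μ y * (M ^ t) y x := by
    intro t
    induction t with
    | zero =>
      intro x y
      simp only [pow_zero, Matrix.one_apply]
      rcases eq_or_ne x y with rfl | hne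
      · rfl
      · simp [hne, Ne.symm hne]
    | succ t ih =>
      intro x y
      conv_lhs => rw [pow_succ]
      conv_rhs => rw [pow_succ']
      rw [Matrix.mul_apply, Matrix.mul_apply, Finset.mul_sum, Finset.mul_sum]
      refine Finset.sum_congr rfl fun k _ => ?_
      have h1 := ih x k
      have h2 := hrev k y
      rw [hMapp, hMapp]
      calc μ x * ((M ^ t) x k * P k y) = (μ x * (M ^ t) x k) * P k y := by ring
        _ = (μ k * (M ^ t) k x) * P k y := by rw [h1]
        _ = (M ^ t) k x * (μ k * P k y) := by ring
        _ = (M ^ t) k x * (μ y * P y k) := by rw [h2]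
        _ = μ y * (P y k * (M ^ t) k x) := by ring
  have hμpos : ∀ v, 0 < μ v := by
    intro v
    rcases (hμ v).lt_or_eq with h | h
    · exact h
    · exfalso
      obtain ⟨t, ht⟩ := hirr z v
      have h1 := hrevt t z v
      rw [← h, zero_mul] at h1
      nlinarith
  have hμne : ∀ v, μ v ≠ 0 := fun v => (hμpos v).ne'
  set f : ℕ → V → ℝ := fun r v => (M ^ r) z v / μ v with hf
  have hrec : ∀ r v, f (r + 1) v = ∑ u, P v u * f r u := by
    intro r v
    simp only [hf]
    rw [pow_succ, Matrix.mul_apply, Finset.sum_div]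
    refine Finset.sum_congr rfl fun u _ => ?_
    rw [hMapp]
    have h := hrev u v
    rw [← mul_div_assoc, div_eq_div_iff (hμne v) (hμne u)]
    linear_combination ((M ^ r) z u) * h
  have hrow : ∀ (t : ℕ) (x : V), ∑ y, (M ^ t) x y = 1 := by
    intro t
    induction t with
    | zero => intro x; simp [Matrix.one_apply]
    | succ t ih =>
      intro x
      simp_rw [pow_succ, Matrix.mul_apply]
      rw [Finset.sum_comm]
      simp_rw [← Finset.mul_sum]
      have hone : ∀ k : V, ∑ y, M k y = 1 := by
        intro k; simp_rw [hMapp]; exact hP1 k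
      simp_rw [hone, mul_one]
      exact ih x
  have hsum1 : ∀ r, ∑ v, μ v * f r v = 1 := by
    intro r
    simp only [hf]
    have h : ∀ v, μ v * ((M ^ r) z v / μ v) = (M ^ r) z v := by
      intro v; rw [mul_comm, div_mul_cancel₀ _ (hμne v)]
    simp_rw [h]
    exact hrow r z
  set N : ℕ → ℝ := fun r => ∑ v, μ v * f r v ^ 2 with hN
  -- Dirichlet form expansion
  have hA : ∀ r, (∑ u, ∑ v, μ u * P u v * (f r u - f r v) ^ 2)
      = 2 * N r - 2 * ∑ v, μ v * f r v * f (r + 1) v := by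
    intro r
    have e1 : ∀ u, (∑ v, μ u * P u v * (f r u - f r v) ^ 2)
        = μ u * f r u ^ 2 - 2 * (μ u * f r u) * f (r + 1) u
          + ∑ v, (μ u * P u v) * f r v ^ 2 := by
      intro u
      have expand : ∀ v, μ u * P u v * (f r u - f r v) ^ 2
          = (μ u * f r u ^ 2) * P u v - (2 * (μ u * f r u)) * (P u v * f r v)
            + (μ u * P u v) * f r v ^ 2 := by intro v; ring
      simp_rw [expand]
      rw [Finset.sum_add_distrib, Finset.sum_sub_distrib, ← Finset.mul_sum, ← Finset.mul_sum,
        hP1, mul_one, ← hrec r u]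
    simp_rw [e1]
    rw [Finset.sum_add_distrib, Finset.sum_sub_distrib]
    have h3 : (∑ u, ∑ v, (μ u * P u v) * f r v ^ 2) = N r := by
      rw [Finset.sum_comm]
      simp_rw [← Finset.sum_mul, hstat]
      try rfl
    rw [h3]
    simp only [hN]
    have h4 : ∀ v, 2 * (μ v * f r v) * f (r + 1) v = 2 * (μ v * f r v * f (r + 1) v) := by
      intro v; ring
    simp_rw [h4]
    rw [← Finset.mul_sum]
    try ring
  -- half-step decomposition
  have hhalf : ∀ r v, f (r + 1) v = (f r v + ∑ u, P' v u * f r u) / 2 := by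
    intro r v
    rw [hrec]
    simp_rw [hlazy]
    have h : ∀ u, (1 / 2 : ℝ) * ((if v = u then 1 else 0) + P' v u) * f r u
        = (1 / 2) * ((if v = u then f r u else 0) + P' v u * f r u) := by
      intro u; split_ifs <;> ring
    simp_rw [h, ← Finset.mul_sum, Finset.sum_add_distrib, Finset.sum_ite_eq]
    simp
    try ring
  -- contraction of P'
  have hB : ∀ r, (∑ v, μ v * (∑ u, P' v u * f r u) ^ 2) ≤ N r := by
    intro r
    have step1 : ∀ v, (∑ u, P' v u * f r u) ^ 2 ≤ ∑ u, P' v u * f r u ^ 2 :=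
      fun v => jensen_sq_aux (P' v) (f r) (hP'nn v) (hP'1 v)
    calc (∑ v, μ v * (∑ u, P' v u * f r u) ^ 2)
        ≤ ∑ v, μ v * ∑ u, P' v u * f r u ^ 2 :=
          Finset.sum_le_sum fun v _ => mul_le_mul_of_nonneg_left (step1 v) (hμ v)
      _ = N r := by
          simp_rw [Finset.mul_sum]
          rw [Finset.sum_comm]
          simp_rw [← mul_assoc, ← Finset.sum_mul, hstat']
          try rfl
  -- monotonicity step
  have hC : ∀ r, N (r + 1) ≤ ∑ v, μ v * f r v * f (r + 1) v := by
    intro r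
    have pt : ∀ v, μ v * f r v * f (r + 1) v - μ v * f (r + 1) v ^ 2
        = (μ v * f r v ^ 2 - μ v * (∑ u, P' v u * f r u) ^ 2) / 4 := by
      intro v; rw [hhalf r v]; ring
    have hsum : (∑ v, μ v * f r v * f (r + 1) v) - N (r + 1)
        = (N r - ∑ v, μ v * (∑ u, P' v u * f r u) ^ 2) / 4 := by
      simp only [hN]
      rw [← Finset.sum_sub_distrib]
      simp_rw [pt]
      rw [← Finset.sum_div, ← Finset.sum_sub_distrib]
    have := hB r
    linarith
  -- chi-square at time T at least 1
  have hNT : 1 ≤ N T := by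
    have h := jensen_sq_aux μ (f T) hμ hμ1
    rw [hsum1 T] at h
    simpa using h
  -- telescoping
  have htel : (∑ r ∈ Finset.range T, ∑ u, ∑ v, μ u * P u v * (f r u - f r v) ^ 2)
      ≤ 2 * (N 0 - N T) := by
    have step : ∀ r, (∑ u, ∑ v, μ u * P u v * (f r u - f r v) ^ 2)
        ≤ 2 * N r - 2 * N (r + 1) := by
      intro r
      rw [hA r]
      have := hC r
      linarith
    calc (∑ r ∈ Finset.range T, ∑ u, ∑ v, μ u * P u v * (f r u - f r v) ^ 2)
        ≤ ∑ r ∈ Finset.range T, (2 * N r - 2 * N (r + 1)) :=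
          Finset.sum_le_sum fun r _ => step r
      _ = 2 * N 0 - 2 * N T := Finset.sum_range_sub' (fun r => 2 * N r) T
      _ = 2 * (N 0 - N T) := by ring
  have hN0 : N 0 = 1 / μ z := by
    simp only [hN, hf, pow_zero, Matrix.one_apply]
    rw [Finset.sum_eq_single z]
    · simp only [if_pos rfl]
      field_simp
      simp
    · intro b _ hb
      simp [Ne.symm hb]
    · simp
  have hS : (∑ v, μ v * ((if v = z then (1 : ℝ) else 0) / μ v) ^ 2) = 1 / μ z := by
    rw [Finset.sum_eq_single z]
    · simp only [if_pos rfl]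
      field_simp
      simp
    · intro b _ hb
      simp [hb]
    · simp
  constructor
  · show (∑ r ∈ Finset.range T, ∑ u, ∑ v, μ u * P u v * (f r u - f r v) ^ 2)
      ≤ 2 * ((∑ v, μ v * ((if v = z then (1 : ℝ) else 0) / μ v) ^ 2) - 1)
    rw [hS]
    rw [hN0] at htel
    linarith
  · rw [hS]
    rw [mul_sub, mul_one, mul_one_div]
    linarith
end

section
/- Let π and π⋆ be distributions on a finite set Y, let r : Y → {0,1}, and suppose P_{y ~ π⋆}[π⋆(y)/π(y) ≥ F] ≤ ε for some F > 0 and ε ∈ (0,1). For δ ∈ (0,1), the Best-of-N procedure that draws N = ⌈F·log(1/δ)⌉ i.i.d. samples from π and returns any sample maximizing r achieves E[r(ŷ)] ≥ E_{y~π⋆}[r(y)] − ε − δ. -/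
open Finset

/-- **Best-of-N under approximate coverage.** Let `π, π⋆` be distributions on a finite
set `Y`, `r : Y → {0,1}` a binary reward, and suppose
`P_{y ~ π⋆}[π⋆(y)/π(y) ≥ F] ≤ ε`. With `N = ⌈F·log(1/δ)⌉` i.i.d. samples from `π`,
the Best-of-N procedure (whose expected reward is `1 − (1 − π({r = 1}))^N`)
achieves `E[r(ŷ)] ≥ E_{π⋆}[r] − ε − δ`. -/
theorem best_of_n_coverage {Y : Type*} [Fintype Y] [DecidableEq Y]
    (π πstar : Y → ℝ)
    (hπ : ∀ y, 0 ≤ π y) (hπ1 : ∑ y, π y = 1)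
    (hπs : ∀ y, 0 ≤ πstar y) (hπs1 : ∑ y, πstar y = 1)
    (r : Y → ℝ) (hr : ∀ y, r y = 0 ∨ r y = 1)
    (F : ℝ) (hF : 0 < F) (ε : ℝ) (hε : 0 < ε) (hε1 : ε < 1)
    (hcov : (∑ y, if F * π y ≤ πstar y then πstar y else 0) ≤ ε)
    (δ : ℝ) (hδ : 0 < δ) (hδ1 : δ < 1) :
    (∑ y, πstar y * r y) - ε - δ
      ≤ 1 - (1 - ∑ y, (if r y = 1 then π y else 0)) ^ ⌈F * Real.log (1 / δ)⌉₊ := by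
  set N := ⌈F * Real.log (1 / δ)⌉₊ with hN
  set p : ℝ := ∑ y, (if r y = 1 then π y else 0) with hpdef
  have hp0 : 0 ≤ p := Finset.sum_nonneg fun y _ => by
    split
    exacts [hπ y, le_refl 0]
  have hp1 : p ≤ 1 := by
    rw [← hπ1]
    exact Finset.sum_le_sum fun y _ => by split <;> simp [hπ y]
  have hpow0 : (0:ℝ) ≤ (1 - p) ^ N := pow_nonneg (by linarith) N
  have hpow1 : (1 - p) ^ N ≤ 1 := pow_le_one₀ (by linarith) (by linarith)
  have hS : ∑ y, πstar y * r y = ∑ y, (if r y = 1 then πstar y else 0) := by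
    refine Finset.sum_congr rfl fun y _ => ?_
    rcases hr y with h | h <;> simp [h]
  set S : ℝ := ∑ y, (if r y = 1 then πstar y else 0) with hSdef
  have hS1 : S ≤ 1 := by
    rw [← hπs1]
    exact Finset.sum_le_sum fun y _ => by split <;> simp [hπs y]
  rw [hS]
  -- key coverage bound : S - ε ≤ F * p
  have hkey : S - ε ≤ F * p := by
    have hsplit : S ≤ (∑ y, (if F * π y ≤ πstar y then πstar y else 0))
        + ∑ y, (if r y = 1 ∧ ¬ (F * π y ≤ πstar y) then πstar y else 0) := by
      rw [← Finset.sum_add_distrib]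
      refine Finset.sum_le_sum fun y _ => ?_
      by_cases h1 : r y = 1 <;> by_cases h2 : F * π y ≤ πstar y <;>
        simp [h1, h2, hπs y]
    have hEF : (∑ y, (if r y = 1 ∧ ¬ (F * π y ≤ πstar y) then πstar y else 0))
        ≤ F * p := by
      rw [hpdef, Finset.mul_sum]
      refine Finset.sum_le_sum fun y _ => ?_
      by_cases h1 : r y = 1
      · by_cases h2 : F * π y ≤ πstar y
        · simp [h1, h2]; exact mul_nonneg hF.le (hπ y)
        · simp [h1, h2]; linarith [not_le.mp h2]
      · simp [h1]
    linarith
  by_cases hx0 : S - ε ≤ 0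
  · linarith
  push_neg at hx0
  set x : ℝ := S - ε with hxdef
  have hx1 : x ≤ 1 := by linarith
  have hL : 0 < Real.log (1 / δ) := Real.log_pos (by rw [lt_div_iff₀ hδ]; linarith)
  have hNge : F * Real.log (1 / δ) ≤ (N : ℝ) := Nat.le_ceil _
  -- (1-p)^N ≤ exp(-(p*N))
  have h1 : (1 - p) ^ N ≤ Real.exp (-(p * N)) := by
    calc (1 - p) ^ N ≤ (Real.exp (-p)) ^ N := by
          refine pow_le_pow_left₀ (by linarith) ?_ N
          linarith [Real.add_one_le_exp (-p)]
      _ = Real.exp (-(p * N)) := by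
          rw [← Real.exp_nat_mul]; ring_nf
  -- exp(-(p*N)) ≤ δ ^ x
  have h2 : Real.exp (-(p * N)) ≤ δ ^ x := by
    rw [Real.rpow_def_of_pos hδ]
    apply Real.exp_le_exp.mpr
    have hlogδ : Real.log δ = - Real.log (1 / δ) := by
      rw [Real.log_div one_ne_zero (ne_of_gt hδ)]; simp
    rw [hlogδ]
    have h3 : x * Real.log (1 / δ) ≤ p * N := by
      nlinarith [mul_nonneg hp0 (sub_nonneg.mpr hNge),
        mul_le_mul_of_nonneg_right hkey hL.le]
    nlinarith
  -- δ ^ x ≤ 1 - x + x * δ  by convexity of exp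
  have h4 : δ ^ x ≤ 1 - x + x * δ := by
    have hc := convexOn_exp.2 (Set.mem_univ (0:ℝ)) (Set.mem_univ (Real.log δ))
      (by linarith : (0:ℝ) ≤ 1 - x) (le_of_lt hx0) (by ring)
    rw [Real.rpow_def_of_pos hδ]
    simp only [smul_eq_mul, mul_zero, zero_add, Real.exp_zero, mul_one,
      Real.exp_log hδ] at hc
    calc Real.exp (Real.log δ * x) = Real.exp ((1-x) * 0 + x * Real.log δ) := by
          ring_nf
      _ ≤ (1 - x) + x * δ := by simpa using hc
      _ = 1 - x + x * δ := by ring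
  have h5 : x * δ ≤ δ := by nlinarith
  have : (1 - p) ^ N ≤ 1 - x + δ := by
    calc (1 - p) ^ N ≤ δ ^ x := le_trans h1 h2
      _ ≤ 1 - x + x * δ := h4
      _ ≤ 1 - x + δ := by linarith
  linarith
end

section
/- Suppose the approximate value function satisfies the scale-invariant additive error bound |V̂(y_{1:h}) − V⋆(y_{1:h})| ≤ ε·V⋆(∅) for all h ∈ [H] and all prefixes y_{1:h}, where V⋆(∅) = E_{π_ref}[τ] > 0. Then the shifted value function V̂'(y_{1:h}) := V̂(y_{1:h}) + ε·V⋆(∅) satisfies the average-case multiplicative bounds E_{π⋆}[V̂'(y_{1:h})/V⋆(y_{1:h})] ≤ 1 + 2ε and E_{π⋆}[V⋆(y_{1:h})/V̂'(y_{1:h})] ≤ 1 for each h ∈ [H]. -/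
open Finset

/-- The value function `V⋆(y_{1:h}) = E_{π_ref}[τ(y_{1:H}) | y_{1:h}]`. -/
noncomputable def prefixVstar {H : ℕ} {A : Type*} [Fintype A] [DecidableEq A]
    (πref τ : (Fin H → A) → ℝ) (h : ℕ) (y : Fin H → A) : ℝ :=
  (∑ z : Fin H → A, if ∀ i : Fin H, (i : ℕ) < h → z i = y i then πref z * τ z else 0) /
    prefixMarg πref h y

/-- Auxiliary: numerator of the value function. -/
noncomputable def prefN {H : ℕ} {A : Type*} [Fintype A] [DecidableEq A]
    (πref τ : (Fin H → A) → ℝ) (h : ℕ) (y : Fin H → A) : ℝ :=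
  ∑ z : Fin H → A, if ∀ i : Fin H, (i : ℕ) < h → z i = y i then πref z * τ z else 0

lemma prefixVstar_eq_div {H : ℕ} {A : Type*} [Fintype A] [DecidableEq A]
    (πref τ : (Fin H → A) → ℝ) (h : ℕ) (y : Fin H → A) :
    prefixVstar πref τ h y = prefN πref τ h y / prefixMarg πref h y := rfl

lemma prefN_congr {H : ℕ} {A : Type*} [Fintype A] [DecidableEq A]
    (πref τ : (Fin H → A) → ℝ) (h : ℕ) {y w : Fin H → A}
    (hyw : ∀ i : Fin H, (i : ℕ) < h → y i = w i) :
    prefN πref τ h y = prefN πref τ h w := by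
  unfold prefN
  refine Finset.sum_congr rfl fun u _ => ?_
  refine if_congr ?_ rfl rfl
  constructor
  · intro hu i hi; rw [hu i hi, hyw i hi]
  · intro hu i hi; rw [hu i hi, ← hyw i hi]

lemma single_le_prefN {H : ℕ} {A : Type*} [Fintype A] [DecidableEq A]
    (πref τ : (Fin H → A) → ℝ) (hπ : ∀ z, 0 ≤ πref z) (hτ : ∀ z, 0 ≤ τ z)
    (h : ℕ) (y : Fin H → A) :
    πref y * τ y ≤ prefN πref τ h y := by
  unfold prefN
  have := Finset.single_le_sum (f := fun z : Fin H → A =>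
      if ∀ i : Fin H, (i : ℕ) < h → z i = y i then πref z * τ z else 0)
    (fun z _ => by split
                   · exact mul_nonneg (hπ z) (hτ z)
                   · exact le_rfl) (Finset.mem_univ y)
  simpa using this

lemma single_le_prefixMarg {H : ℕ} {A : Type*} [Fintype A] [DecidableEq A]
    (πref : (Fin H → A) → ℝ) (hπ : ∀ z, 0 ≤ πref z)
    (h : ℕ) (y : Fin H → A) :
    πref y ≤ prefixMarg πref h y := by
  unfold prefixMarg
  have := Finset.single_le_sum (f := fun z : Fin H → A =>
      if ∀ i : Fin H, (i : ℕ) < h → z i = y i then πref z else 0)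
    (fun z _ => by split
                   · exact hπ z
                   · exact le_rfl) (Finset.mem_univ y)
  simpa using this

lemma prefN_nonneg {H : ℕ} {A : Type*} [Fintype A] [DecidableEq A]
    (πref τ : (Fin H → A) → ℝ) (hπ : ∀ z, 0 ≤ πref z) (hτ : ∀ z, 0 ≤ τ z)
    (h : ℕ) (y : Fin H → A) : 0 ≤ prefN πref τ h y :=
  Finset.sum_nonneg fun z _ => by
    split
    · exact mul_nonneg (hπ z) (hτ z)
    · exact le_rfl

lemma prefixMarg_nonneg {H : ℕ} {A : Type*} [Fintype A] [DecidableEq A]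
    (πref : (Fin H → A) → ℝ) (hπ : ∀ z, 0 ≤ πref z)
    (h : ℕ) (y : Fin H → A) : 0 ≤ prefixMarg πref h y :=
  Finset.sum_nonneg fun z _ => by
    split
    · exact hπ z
    · exact le_rfl

/-- Key identity (inequality form): `∑ πref·τ·(M/N) ≤ 1`. -/
lemma key_sum_le_one {H : ℕ} {A : Type*} [Fintype A] [DecidableEq A]
    (πref τ : (Fin H → A) → ℝ)
    (hπ : ∀ z, 0 ≤ πref z) (hπ1 : ∑ z, πref z = 1) (hτ : ∀ z, 0 ≤ τ z) (h : ℕ) :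
    ∑ z, πref z * τ z * (prefixMarg πref h z / prefN πref τ h z) ≤ 1 := by
  have step1 : ∀ z : Fin H → A,
      πref z * τ z * (prefixMarg πref h z / prefN πref τ h z)
        = ∑ w : Fin H → A, if ∀ i : Fin H, (i : ℕ) < h → w i = z i then
            (πref z * τ z / prefN πref τ h z) * πref w else 0 := by
    intro z
    unfold prefixMarg
    have ha : ∀ a n s : ℝ, a * (s / n) = a / n * s := fun a n s => by ring
    rw [ha, Finset.mul_sum]
    refine Finset.sum_congr rfl fun w _ => ?_
    rw [mul_ite, mul_zero]
  calc ∑ z, πref z * τ z * (prefixMarg πref h z / prefN πref τ h z)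
      = ∑ z : Fin H → A, ∑ w : Fin H → A,
          if ∀ i : Fin H, (i : ℕ) < h → w i = z i then
            (πref z * τ z / prefN πref τ h z) * πref w else 0 :=
        Finset.sum_congr rfl fun z _ => step1 z
    _ = ∑ w : Fin H → A, ∑ z : Fin H → A,
          if ∀ i : Fin H, (i : ℕ) < h → w i = z i then
            (πref z * τ z / prefN πref τ h z) * πref w else 0 := Finset.sum_comm
    _ ≤ ∑ w, πref w := by
        refine Finset.sum_le_sum fun w _ => ?_
        have hterm : ∀ z : Fin H → A,
            (if ∀ i : Fin H, (i : ℕ) < h → w i = z i then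
              (πref z * τ z / prefN πref τ h z) * πref w else 0)
            = (if ∀ i : Fin H, (i : ℕ) < h → z i = w i then πref z * τ z else 0) *
                (πref w / prefN πref τ h w) := by
          intro z
          by_cases hc : ∀ i : Fin H, (i : ℕ) < h → z i = w i
          · have hc' : ∀ i : Fin H, (i : ℕ) < h → w i = z i :=
              fun i hi => (hc i hi).symm
            rw [if_pos hc', if_pos hc, prefN_congr πref τ h hc]
            ring
          · have hc' : ¬ ∀ i : Fin H, (i : ℕ) < h → w i = z i := by
              intro hco; exact hc fun i hi => (hco i hi).symm
            rw [if_neg hc', if_neg hc, zero_mul]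
        rw [Finset.sum_congr rfl fun z _ => hterm z, ← Finset.sum_mul]
        have hNdef : (∑ z : Fin H → A,
            if ∀ i : Fin H, (i : ℕ) < h → z i = w i then πref z * τ z else 0)
            = prefN πref τ h w := rfl
        rw [hNdef]
        rcases (prefN_nonneg πref τ hπ hτ h w).eq_or_lt with h0 | h0
        · rw [← h0, zero_mul]; exact hπ w
        · rw [mul_comm, div_mul_cancel₀ _ (ne_of_gt h0)]
    _ = 1 := hπ1

/-- **Scale-invariant additive error implies average-case multiplicative error.**
Suppose `|V̂(y_{1:h}) − V⋆(y_{1:h})| ≤ ε·V⋆(∅)` for all `h ∈ [H]` and all prefixes,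
where `V⋆(∅) = E_{π_ref}[τ] > 0`. Then the shifted value function
`V̂'(y_{1:h}) = V̂(y_{1:h}) + ε·V⋆(∅)` satisfies
`E_{π⋆}[V̂'/V⋆] ≤ 1 + 2ε` and `E_{π⋆}[V⋆/V̂'] ≤ 1` at each level `h ∈ [H]`. -/
theorem scale_invariant_additive {H : ℕ} {A : Type*} [Fintype A] [DecidableEq A]
    (πref τ : (Fin H → A) → ℝ)
    (hπ : ∀ z, 0 ≤ πref z) (hπ1 : ∑ z, πref z = 1)
    (hτ : ∀ z, 0 ≤ τ z) (hτpos : 0 < ∑ z, πref z * τ z)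
    (πstar : (Fin H → A) → ℝ)
    (hπstar : ∀ z, πstar z = πref z * τ z / ∑ z', πref z' * τ z')
    (ε : ℝ) (hε : 0 < ε)
    (Vhat : ℕ → (Fin H → A) → ℝ)
    (hadd : ∀ h, 1 ≤ h → h ≤ H → ∀ y : Fin H → A,
      |Vhat h y - prefixVstar πref τ h y| ≤ ε * ∑ z, πref z * τ z) :
    ∀ h, 1 ≤ h → h ≤ H →
      (∑ z, πstar z *
          ((Vhat h z + ε * ∑ z', πref z' * τ z') / prefixVstar πref τ h z)) ≤ 1 + 2 * ε ∧
      (∑ z, πstar z *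
          (prefixVstar πref τ h z / (Vhat h z + ε * ∑ z', πref z' * τ z'))) ≤ 1 := by
  intro h h1 hH
  set S : ℝ := ∑ z, πref z * τ z with hSdef
  have hSpos : 0 < S := hτpos
  have hSne : S ≠ 0 := ne_of_gt hSpos
  have hstar_nonneg : ∀ z, 0 ≤ πstar z := fun z => by
    rw [hπstar]
    exact div_nonneg (mul_nonneg (hπ z) (hτ z)) (le_of_lt hSpos)
  have hstar_sum : ∑ z, πstar z = 1 := by
    calc ∑ z, πstar z = ∑ z, πref z * τ z / S :=
          Finset.sum_congr rfl fun z _ => hπstar z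
      _ = S / S := by rw [← Finset.sum_div]
      _ = 1 := div_self hSne
  have hVnonneg : ∀ z, 0 ≤ prefixVstar πref τ h z := fun z => by
    rw [prefixVstar_eq_div]
    exact div_nonneg (prefN_nonneg πref τ hπ hτ h z) (prefixMarg_nonneg πref hπ h z)
  have hVpos : ∀ z, 0 < πstar z → 0 < prefixVstar πref τ h z := by
    intro z hz
    have hprod : 0 < πref z * τ z := by
      have : πref z * τ z = πstar z * S := by rw [hπstar]; field_simp
      rw [this]; exact mul_pos hz hSpos
    have hπz : 0 < πref z := by
      rcases (hπ z).eq_or_lt with h0 | h0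
      · exfalso; rw [← h0, zero_mul] at hprod; exact lt_irrefl 0 hprod
      · exact h0
    rw [prefixVstar_eq_div]
    exact div_pos (lt_of_lt_of_le hprod (single_le_prefN πref τ hπ hτ h z))
      (lt_of_lt_of_le hπz (single_le_prefixMarg πref hπ h z))
  have hratio : ∑ z, πstar z / prefixVstar πref τ h z ≤ 1 / S := by
    have heq : ∀ z : Fin H → A, πstar z / prefixVstar πref τ h z
        = πref z * τ z * (prefixMarg πref h z / prefN πref τ h z) / S := by
      intro z
      rw [hπstar, prefixVstar_eq_div]
      rw [div_div_eq_mul_div]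
      ring
    rw [Finset.sum_congr rfl fun z _ => heq z, ← Finset.sum_div]
    have := key_sum_le_one πref τ hπ hπ1 hτ h
    gcongr
  constructor
  · -- first bound
    have hterm : ∀ z : Fin H → A,
        πstar z * ((Vhat h z + ε * S) / prefixVstar πref τ h z)
          ≤ πstar z + 2 * ε * S * (πstar z / prefixVstar πref τ h z) := by
      intro z
      rcases (hVnonneg z).eq_or_lt with h0 | h0
      · rw [← h0, div_zero, mul_zero, div_zero, mul_zero, add_zero]
        exact hstar_nonneg z
      · have habs := abs_le.mp (hadd h h1 hH z)
        have hup : Vhat h z + ε * S ≤ prefixVstar πref τ h z + 2 * ε * S := by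
          have h2 := habs.2; linarith
        have hdiv : (Vhat h z + ε * S) / prefixVstar πref τ h z
            ≤ (prefixVstar πref τ h z + 2 * ε * S) / prefixVstar πref τ h z := by
          gcongr
        calc πstar z * ((Vhat h z + ε * S) / prefixVstar πref τ h z)
            ≤ πstar z * ((prefixVstar πref τ h z + 2 * ε * S) / prefixVstar πref τ h z) :=
              mul_le_mul_of_nonneg_left hdiv (hstar_nonneg z)
          _ = πstar z + 2 * ε * S * (πstar z / prefixVstar πref τ h z) := by
              rw [add_div, div_self (ne_of_gt h0)]
              ring
    calc ∑ z, πstar z * ((Vhat h z + ε * S) / prefixVstar πref τ h z)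
        ≤ ∑ z, (πstar z + 2 * ε * S * (πstar z / prefixVstar πref τ h z)) :=
          Finset.sum_le_sum fun z _ => hterm z
      _ = (∑ z, πstar z) + 2 * ε * S * ∑ z, πstar z / prefixVstar πref τ h z := by
          rw [Finset.sum_add_distrib, ← Finset.mul_sum]
      _ ≤ 1 + 2 * ε * S * (1 / S) := by
          rw [hstar_sum]
          have h2 : 0 < 2 * ε * S := by positivity
          exact add_le_add le_rfl (mul_le_mul_of_nonneg_left hratio (le_of_lt h2))
      _ = 1 + 2 * ε := by field_simp
  · -- second bound
    calc ∑ z, πstar z * (prefixVstar πref τ h z / (Vhat h z + ε * S))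
        ≤ ∑ z, πstar z := by
          refine Finset.sum_le_sum fun z _ => ?_
          rcases (hstar_nonneg z).eq_or_lt with h0 | h0
          · rw [← h0, zero_mul]
          · have hVp := hVpos z h0
            have hD : prefixVstar πref τ h z ≤ Vhat h z + ε * S := by
              have h2 := (abs_le.mp (hadd h h1 hH z)).1
              linarith
            have hr : prefixVstar πref τ h z / (Vhat h z + ε * S) ≤ 1 :=
              (div_le_one (lt_of_lt_of_le hVp hD)).mpr hD
            exact mul_le_of_le_one_right (le_of_lt h0) hr
      _ = 1 := hstar_sum
end
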